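/- arXiv:1612.08051 — 2 statements merged into one kernel-verified Lean document; each statement's English description precedes it below -/
import Mathlib

section
/- Let R be a Poisson algebra over a field K with char K ≠ 2, 3. Then {γ_m(R)·R, R, R} ⊆ γ_{m+2}(R)·R for all m ≥ 2, i.e., {{cx, y}, z} ∈ γ_{m+2}(R)·R whenever c ∈ γ_m(R) and x, y, z ∈ R. -/
/-- A Poisson algebra structure on a commutative `K`-algebra `R`:
a `K`-bilinear bracket which is antisymmetric, satisfies the Jacobi identity
and the Leibniz rule. -/
structure PoissonStr (K R : Type*) [Field K] [CommRing R] [Algebra K R] where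
  bracket : R →ₗ[K] R →ₗ[K] R
  antisymm : ∀ a b : R, bracket a b = - bracket b a
  jacobi : ∀ a b c : R,
    bracket (bracket a b) c + bracket (bracket b c) a + bracket (bracket c a) b = 0
  leibniz : ∀ a b c : R, bracket (a * b) c = a * bracket b c + b * bracket a c

namespace PoissonStr

variable {K R : Type*} [Field K] [CommRing R] [Algebra K R]

/-- The span `{M, N}` of brackets of elements of two subspaces. -/
def sBr (P : PoissonStr K R) (M N : Submodule K R) : Submodule K R :=
  Submodule.span K {z : R | ∃ m ∈ M, ∃ n ∈ N, z = P.bracket m n}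

/-- Upper Lie powers: `R^(0) = R`, `R^(n+1) = {R^(n), R}·R`. -/
def upper (P : PoissonStr K R) : ℕ → Submodule K R
  | 0 => ⊤
  | n + 1 => P.sBr (upper P n) ⊤ * ⊤

/-- Lower central series of `R` as a Lie algebra: `γ_1 = R`,
`γ_{n+1} = {γ_n, R}` (with the convention `γ_0 = R`). -/
def gamma (P : PoissonStr K R) : ℕ → Submodule K R
  | 0 => ⊤
  | 1 => ⊤
  | n + 2 => P.sBr (gamma P (n + 1)) ⊤

/-- Derived series of `R` as a Lie algebra. -/
def derived (P : PoissonStr K R) : ℕ → Submodule K R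
  | 0 => ⊤
  | n + 1 => P.sBr (derived P n) (derived P n)

/-- Upper derived series: `δ̃_0 = R`, `δ̃_{n+1} = {δ̃_n, δ̃_n}·R`. -/
def uderived (P : PoissonStr K R) : ℕ → Submodule K R
  | 0 => ⊤
  | n + 1 => P.sBr (uderived P n) (uderived P n) * ⊤

end PoissonStr


namespace PoissonStr

variable {K R : Type*} [Field K] [CommRing R] [Algebra K R]

variable (P : PoissonStr K R)

lemma mem_sBr {M N : Submodule K R} {a b : R} (ha : a ∈ M) (hb : b ∈ N) :
    P.bracket a b ∈ P.sBr M N :=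
  Submodule.subset_span ⟨a, ha, b, hb, rfl⟩

lemma sBr_mono {M M' N : Submodule K R} (h : M ≤ M') : P.sBr M N ≤ P.sBr M' N :=
  Submodule.span_mono (fun z hz => by
    obtain ⟨m, hm, n, hn, rfl⟩ := hz; exact ⟨m, h hm, n, hn, rfl⟩)

lemma gamma_one : P.gamma 1 = ⊤ := rfl
lemma gamma_two (n : ℕ) : P.gamma (n+2) = P.sBr (P.gamma (n+1)) ⊤ := rfl

lemma gamma_succ_le : ∀ n, P.gamma (n+1) ≤ P.gamma n
  | 0 => le_top
  | 1 => le_top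
  | (n+2) => by
      rw [P.gamma_two, P.gamma_two]
      exact P.sBr_mono (gamma_succ_le (n+1))

lemma gamma_le {i j : ℕ} (h : j ≤ i) : P.gamma i ≤ P.gamma j := by
  induction h with
  | refl => exact le_rfl
  | step h ih => exact le_trans (P.gamma_succ_le _) ih

lemma br_mem_top (i : ℕ) (a : R) (ha : a ∈ P.gamma (i+1)) (b : R) :
    P.bracket a b ∈ P.gamma (i+2) :=
  P.mem_sBr ha Submodule.mem_top

lemma br_add_left (a b c : R) : P.bracket (a+b) c = P.bracket a c + P.bracket b c := by
  rw [map_add, LinearMap.add_apply]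

lemma br_zero_left (c : R) : P.bracket 0 c = 0 := by
  rw [map_zero, LinearMap.zero_apply]

lemma br_mul_right (a b c : R) :
    P.bracket a (b*c) = b * P.bracket a c + c * P.bracket a b := by
  linear_combination P.antisymm a (b*c) - P.leibniz b c a - b * P.antisymm a c -
    c * P.antisymm a b

lemma br_mem_gamma : ∀ (j i : ℕ), ∀ a ∈ P.gamma (i+1), ∀ b ∈ P.gamma (j+1),
    P.bracket a b ∈ P.gamma (i+j+2) := by
  intro j
  induction j with
  | zero => intro i a ha b _; exact P.br_mem_top i a ha b
  | succ j ih =>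
    intro i a ha b hb
    have hb' : b ∈ Submodule.span K {z : R | ∃ m ∈ P.gamma (j+1), ∃ n ∈ (⊤ : Submodule K R),
        z = P.bracket m n} := hb
    clear hb
    induction hb' using Submodule.span_induction with
    | mem u hu =>
      obtain ⟨mm, hm, n, -, rfl⟩ := hu
      have eq1 : P.bracket a (P.bracket mm n)
          = P.bracket (P.bracket a mm) n + P.bracket (P.bracket n a) mm := by
        linear_combination P.antisymm a (P.bracket mm n) - P.jacobi a mm n
      rw [eq1]
      refine add_mem ?_ ?_
      · have h1 := ih i a ha mm hm
        have h2 := P.br_mem_top (i+j+1) _ h1 n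
        rwa [show i+j+1+2 = i+(j+1)+2 by omega] at h2
      · have h1 : P.bracket n a ∈ P.gamma (i+2) := by
          rw [P.antisymm n a]
          exact neg_mem (P.br_mem_top i a ha n)
        have h2 := ih (i+1) _ h1 mm hm
        rwa [show i+1+j+2 = i+(j+1)+2 by omega] at h2
    | zero => simp only [map_zero]; exact zero_mem _
    | add u v hu hv hpu hpv => rw [map_add]; exact add_mem hpu hpv
    | smul t u hu hpu => rw [map_smul]; exact Submodule.smul_mem _ _ hpu

lemma addC2_l (u a b : R) (h : a + b = 0) :
    P.bracket a u + P.bracket b u = 0 := by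
  rw [← P.br_add_left, h, P.br_zero_left]

lemma addC3_l (u a b c : R) (h : a + b + c = 0) :
    P.bracket a u + P.bracket b u + P.bracket c u = 0 := by
  rw [← P.br_add_left, ← P.br_add_left, h, P.br_zero_left]

lemma addC2_r (u a b : R) (h : a + b = 0) :
    P.bracket u a + P.bracket u b = 0 := by
  rw [← map_add, h, map_zero]

lemma addC3_r (u a b c : R) (h : a + b + c = 0) :
    P.bracket u a + P.bracket u b + P.bracket u c = 0 := by
  rw [← map_add, ← map_add, h, map_zero]


set_option maxHeartbeats 2000000 in
lemma key (e w x y z : R) :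
    3 * (P.bracket (P.bracket (P.bracket e w * x) y) z) =
    (z * (P.bracket e (P.bracket (P.bracket w x) y))) + (z * (P.bracket (P.bracket e x) (P.bracket w y))) + (y * (P.bracket (P.bracket e x) (P.bracket w z))) + (y * (P.bracket (P.bracket e x) (P.bracket w z))) + (y * (P.bracket (P.bracket e (P.bracket w x)) z)) + (x * (P.bracket e (P.bracket (P.bracket w y) z))) + (x * (P.bracket (P.bracket (P.bracket e w) y) z)) + (x * (P.bracket (P.bracket (P.bracket e w) y) z)) + (x * (P.bracket (P.bracket (P.bracket e w) y) z)) + (w * (P.bracket (P.bracket e x) (P.bracket y z))) + (P.bracket e (P.bracket (P.bracket w x) (y*z))) + (P.bracket e (P.bracket (P.bracket w x) (y*z))) + (P.bracket (P.bracket e w) (P.bracket x (y*z))) + (P.bracket (P.bracket e w) (P.bracket (x*y) z)) + (P.bracket (P.bracket e (P.bracket w (x*z))) y) + (P.bracket e (P.bracket (P.bracket (w*x) y) z)) + (P.bracket e (P.bracket (P.bracket (w*x) y) z)) + (P.bracket (P.bracket e y) (P.bracket (w*x) z)) + (P.bracket (P.bracket e (P.bracket (w*x) y)) z) + (P.bracket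 (P.bracket e (P.bracket (w*x) y)) z) + (P.bracket e (P.bracket (w*y) (P.bracket x z))) - (z * (P.bracket (P.bracket e w) (P.bracket x y))) - (z * (P.bracket (P.bracket e (P.bracket w x)) y)) - (y * (P.bracket e (P.bracket (P.bracket w x) z))) - (y * (P.bracket (P.bracket e w) (P.bracket x z))) - (y * (P.bracket (P.bracket e w) (P.bracket x z))) - (x * (P.bracket (P.bracket e w) (P.bracket y z))) - (x * (P.bracket (P.bracket e y) (P.bracket w z))) - (x * (P.bracket (P.bracket e y) (P.bracket w z))) - (x * (P.bracket (P.bracket e (P.bracket w y)) z)) - (w * (P.bracket e (P.bracket (P.bracket x y) z))) - (w * (P.bracket (P.bracket e y) (P.bracket x z))) - (w * (P.bracket (P.bracket e (P.bracket x y)) z)) - (w * (P.bracket (P.bracket e (P.bracket x y)) z)) - (P.bracket (P.bracket e x) (P.bracket w (y*z))) - (P.bracket e (P.bracket w (P.bracket (x*y) z))) - (P.bracket e (P.bracket (P.bracket w (x*y)) z)) - (P.bracket (P.bracket e (P.bracket w (x*y))) z) - (P.bracket e (P.bracket (P.bracket w (x*z)) y)) - (P.bracket e (P.bracket (P.bracket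 w (x*z)) y)) - (P.bracket e (P.bracket (P.bracket w (x*z)) y)) - (P.bracket e (P.bracket (w*x) (P.bracket y z))) - (P.bracket (P.bracket e x) (P.bracket (w*y) z)) := by
  have hB0 : P.bracket e y + P.bracket y e = 0 := by linear_combination P.antisymm e y
  have hE0 := P.addC2_l w _ _ (hB0)
  have hB1 : P.bracket e (P.bracket w y) + P.bracket (P.bracket w y) e = 0 := by linear_combination P.antisymm e (P.bracket w y)
  have hE1 := hB1
  have hB2 := P.jacobi e w y
  have hE2 := hB2
  have hB3 : P.bracket x z + P.bracket z x = 0 := by linear_combination P.antisymm x z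
  have hE3 := P.addC2_l y _ _ (hB3)
  have hB4 : P.bracket x (P.bracket y z) + P.bracket (P.bracket y z) x = 0 := by linear_combination P.antisymm x (P.bracket y z)
  have hE4 := hB4
  have hB5 : P.bracket y (P.bracket x z) + P.bracket (P.bracket x z) y = 0 := by linear_combination P.antisymm y (P.bracket x z)
  have hE5 := hB5
  have hB6 := P.jacobi x y z
  have hE6 := hB6
  have hB7 : P.bracket w z + P.bracket z w = 0 := by linear_combination P.antisymm w z
  have hE7 := P.addC2_r e _ _ (P.addC2_l y _ _ (hB7))
  have hB8 : P.bracket e (P.bracket w z) + P.bracket (P.bracket w z) e = 0 := by linear_combination P.antisymm e (P.bracket w z)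
  have hE8 := P.addC2_l y _ _ (hB8)
  have hB9 : P.bracket w (P.bracket y z) + P.bracket (P.bracket y z) w = 0 := by linear_combination P.antisymm w (P.bracket y z)
  have hE9 := P.addC2_r e _ _ (hB9)
  have hB10 : P.bracket y (P.bracket w z) + P.bracket (P.bracket w z) y = 0 := by linear_combination P.antisymm y (P.bracket w z)
  have hE10 := P.addC2_r e _ _ (hB10)
  have hB11 := P.jacobi w y z
  have hE11 := P.addC3_r e _ _ _ (hB11)
  have hB12 : P.bracket e (P.bracket y (P.bracket w z)) + P.bracket (P.bracket y (P.bracket w z)) e = 0 := by linear_combination P.antisymm e (P.bracket y (P.bracket w z))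
  have hE12 := hB12
  have hB13 := P.jacobi e y (P.bracket w z)
  have hE13 := hB13
  have hB14 : P.bracket x z + P.bracket z x = 0 := by linear_combination P.antisymm x z
  have hE14 := P.addC2_r e _ _ (P.addC2_l y _ _ (hB14))
  have hB15 : P.bracket x (P.bracket y z) + P.bracket (P.bracket y z) x = 0 := by linear_combination P.antisymm x (P.bracket y z)
  have hE15 := P.addC2_r e _ _ (hB15)
  have hB16 : P.bracket y (P.bracket x z) + P.bracket (P.bracket x z) y = 0 := by linear_combination P.antisymm y (P.bracket x z)
  have hE16 := P.addC2_r e _ _ (hB16)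
  have hB17 := P.jacobi x y z
  have hE17 := P.addC3_r e _ _ _ (hB17)
  have hB18 : P.bracket e y + P.bracket y e = 0 := by linear_combination P.antisymm e y
  have hE18 := P.addC2_l x _ _ (hB18)
  have hB19 : P.bracket e (P.bracket x y) + P.bracket (P.bracket x y) e = 0 := by linear_combination P.antisymm e (P.bracket x y)
  have hE19 := hB19
  have hB20 := P.jacobi e x y
  have hE20 := hB20
  have hB21 : P.bracket w z + P.bracket z w = 0 := by linear_combination P.antisymm w z
  have hE21 := P.addC2_l y _ _ (hB21)
  have hB22 : P.bracket w (P.bracket y z) + P.bracket (P.bracket y z) w = 0 := by linear_combination P.antisymm w (P.bracket y z)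
  have hE22 := hB22
  have hB23 := P.jacobi w y z
  have hE23 := hB23
  have hB24 : P.bracket e z + P.bracket z e = 0 := by linear_combination P.antisymm e z
  have hE24 := P.addC2_l y _ _ (hB24)
  have hB25 : P.bracket y z + P.bracket z y = 0 := by linear_combination P.antisymm y z
  have hE25 := P.addC2_r e _ _ (hB25)
  have hB26 : P.bracket e (P.bracket y z) + P.bracket (P.bracket y z) e = 0 := by linear_combination P.antisymm e (P.bracket y z)
  have hE26 := hB26
  have hB27 := P.jacobi e y z
  have hE27 := hB27
  have hB28 : P.bracket e x + P.bracket x e = 0 := by linear_combination P.antisymm e x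
  have hE28 := P.addC2_l w _ _ (hB28)
  have hB29 : P.bracket e (P.bracket w x) + P.bracket (P.bracket w x) e = 0 := by linear_combination P.antisymm e (P.bracket w x)
  have hE29 := hB29
  have hB30 := P.jacobi e w x
  have hE30 := hB30
  have hB31 : P.bracket y z + P.bracket z y = 0 := by linear_combination P.antisymm y z
  have hE31 := hB31
  simp only [P.leibniz, P.br_mul_right, P.br_add_left, map_add, LinearMap.add_apply]
  linear_combination (-1) * (P.bracket x z) * hE0 + (-1) * (P.bracket x z) * hE1 + (1) * (P.bracket x z) * hE2 + (1) * (P.bracket e w) * hE3 + (1) * (P.bracket e w) * hE4 + (-1) * (P.bracket e w) * hE5 + (-1) * (P.bracket e w) * hE6 + (2) * x * hE7 + (-1) * x * hE8 + (2) * x * hE9 + (1) * x * hE10 + (-2) * x * hE11 + (-1) * x * hE12 + (1) * x * hE13 + (1) * w * hE14 + (1) * w * hE15 + (-1) * w * hE16 + (-1) * w * hE17 + (-1) * (P.bracket w z) * hE18 + (-1) * (P.bracket w z) * hE19 + (1) * (P.bracket w z) * hE20 + (2) * (P.bracket e x) * hE21 + (2) * (P.bracket e x) * hE22 + (-2) *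 (P.bracket e x) * hE23 + (-1) * (P.bracket w x) * hE24 + (3) * (P.bracket w x) * hE25 + (-1) * (P.bracket w x) * hE26 + (1) * (P.bracket w x) * hE27 + (1) * (P.bracket y z) * hE28 + (1) * (P.bracket y z) * hE29 + (-1) * (P.bracket y z) * hE30 + (2) * (P.bracket e (P.bracket w x)) * hE31

set_option maxHeartbeats 1000000 in
lemma main_step (h3 : (3:K) ≠ 0) (k : ℕ) (e : R) (he : e ∈ P.gamma (k+1))
    (w x y z : R) :
    P.bracket (P.bracket (P.bracket e w * x) y) z ∈ P.gamma (k+4) * (⊤ : Submodule K R) := by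
  have hM0 : ((z * (P.bracket e (P.bracket (P.bracket w x) y))) : R) ∈ P.gamma (k+4) * (⊤ : Submodule K R) := by
    have t0_1 : (w : R) ∈ P.gamma 1 := Submodule.mem_top
    have t0_2 : (x : R) ∈ P.gamma 1 := Submodule.mem_top
    have t0_3 : ((P.bracket w x) : R) ∈ P.gamma (2) := by
      have h := P.br_mem_gamma (0) (0) _ t0_1 _ t0_2
      rwa [show (0)+(0)+2 = 2 by omega] at h
    have t0_4 : (y : R) ∈ P.gamma 1 := Submodule.mem_top
    have t0_5 : ((P.bracket (P.bracket w x) y) : R) ∈ P.gamma (3) := by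
      have h := P.br_mem_gamma (0) (1) _ t0_3 _ t0_4
      rwa [show (1)+(0)+2 = 3 by omega] at h
    have t0_6 : ((P.bracket e (P.bracket (P.bracket w x) y)) : R) ∈ P.gamma (k+4) := by
      have h := P.br_mem_gamma (2) (k) _ he _ t0_5
      rwa [show (k)+(2)+2 = k+4 by omega] at h
    have ht : ((P.bracket e (P.bracket (P.bracket w x) y)) : R) ∈ P.gamma (k+4) := P.gamma_le (by omega) t0_6
    have hmm := Submodule.mul_mem_mul ht (Submodule.mem_top (x := (z : R)))
    rw [mul_comm (z : R) ((P.bracket e (P.bracket (P.bracket w x) y)) : R)]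
    exact hmm
  have hM1 : ((z * (P.bracket (P.bracket e x) (P.bracket w y))) : R) ∈ P.gamma (k+4) * (⊤ : Submodule K R) := by
    have t1_1 : (x : R) ∈ P.gamma 1 := Submodule.mem_top
    have t1_2 : ((P.bracket e x) : R) ∈ P.gamma (k+2) := by
      have h := P.br_mem_gamma (0) (k) _ he _ t1_1
      rwa [show (k)+(0)+2 = k+2 by omega] at h
    have t1_3 : (w : R) ∈ P.gamma 1 := Submodule.mem_top
    have t1_4 : (y : R) ∈ P.gamma 1 := Submodule.mem_top
    have t1_5 : ((P.bracket w y) : R) ∈ P.gamma (2) := by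
      have h := P.br_mem_gamma (0) (0) _ t1_3 _ t1_4
      rwa [show (0)+(0)+2 = 2 by omega] at h
    have t1_6 : ((P.bracket (P.bracket e x) (P.bracket w y)) : R) ∈ P.gamma (k+4) := by
      have h := P.br_mem_gamma (1) (k+1) _ t1_2 _ t1_5
      rwa [show (k+1)+(1)+2 = k+4 by omega] at h
    have ht : ((P.bracket (P.bracket e x) (P.bracket w y)) : R) ∈ P.gamma (k+4) := P.gamma_le (by omega) t1_6
    have hmm := Submodule.mul_mem_mul ht (Submodule.mem_top (x := (z : R)))
    rw [mul_comm (z : R) ((P.bracket (P.bracket e x) (P.bracket w y)) : R)]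
    exact hmm
  have hM2 : ((y * (P.bracket (P.bracket e x) (P.bracket w z))) : R) ∈ P.gamma (k+4) * (⊤ : Submodule K R) := by
    have t2_1 : (x : R) ∈ P.gamma 1 := Submodule.mem_top
    have t2_2 : ((P.bracket e x) : R) ∈ P.gamma (k+2) := by
      have h := P.br_mem_gamma (0) (k) _ he _ t2_1
      rwa [show (k)+(0)+2 = k+2 by omega] at h
    have t2_3 : (w : R) ∈ P.gamma 1 := Submodule.mem_top
    have t2_4 : (z : R) ∈ P.gamma 1 := Submodule.mem_top
    have t2_5 : ((P.bracket w z) : R) ∈ P.gamma (2) := by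
      have h := P.br_mem_gamma (0) (0) _ t2_3 _ t2_4
      rwa [show (0)+(0)+2 = 2 by omega] at h
    have t2_6 : ((P.bracket (P.bracket e x) (P.bracket w z)) : R) ∈ P.gamma (k+4) := by
      have h := P.br_mem_gamma (1) (k+1) _ t2_2 _ t2_5
      rwa [show (k+1)+(1)+2 = k+4 by omega] at h
    have ht : ((P.bracket (P.bracket e x) (P.bracket w z)) : R) ∈ P.gamma (k+4) := P.gamma_le (by omega) t2_6
    have hmm := Submodule.mul_mem_mul ht (Submodule.mem_top (x := (y : R)))
    rw [mul_comm (y : R) ((P.bracket (P.bracket e x) (P.bracket w z)) : R)]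
    exact hmm
  have hM3 : ((y * (P.bracket (P.bracket e (P.bracket w x)) z)) : R) ∈ P.gamma (k+4) * (⊤ : Submodule K R) := by
    have t3_1 : (w : R) ∈ P.gamma 1 := Submodule.mem_top
    have t3_2 : (x : R) ∈ P.gamma 1 := Submodule.mem_top
    have t3_3 : ((P.bracket w x) : R) ∈ P.gamma (2) := by
      have h := P.br_mem_gamma (0) (0) _ t3_1 _ t3_2
      rwa [show (0)+(0)+2 = 2 by omega] at h
    have t3_4 : ((P.bracket e (P.bracket w x)) : R) ∈ P.gamma (k+3) := by
      have h := P.br_mem_gamma (1) (k) _ he _ t3_3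
      rwa [show (k)+(1)+2 = k+3 by omega] at h
    have t3_5 : (z : R) ∈ P.gamma 1 := Submodule.mem_top
    have t3_6 : ((P.bracket (P.bracket e (P.bracket w x)) z) : R) ∈ P.gamma (k+4) := by
      have h := P.br_mem_gamma (0) (k+2) _ t3_4 _ t3_5
      rwa [show (k+2)+(0)+2 = k+4 by omega] at h
    have ht : ((P.bracket (P.bracket e (P.bracket w x)) z) : R) ∈ P.gamma (k+4) := P.gamma_le (by omega) t3_6
    have hmm := Submodule.mul_mem_mul ht (Submodule.mem_top (x := (y : R)))
    rw [mul_comm (y : R) ((P.bracket (P.bracket e (P.bracket w x)) z) : R)]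
    exact hmm
  have hM4 : ((x * (P.bracket e (P.bracket (P.bracket w y) z))) : R) ∈ P.gamma (k+4) * (⊤ : Submodule K R) := by
    have t4_1 : (w : R) ∈ P.gamma 1 := Submodule.mem_top
    have t4_2 : (y : R) ∈ P.gamma 1 := Submodule.mem_top
    have t4_3 : ((P.bracket w y) : R) ∈ P.gamma (2) := by
      have h := P.br_mem_gamma (0) (0) _ t4_1 _ t4_2
      rwa [show (0)+(0)+2 = 2 by omega] at h
    have t4_4 : (z : R) ∈ P.gamma 1 := Submodule.mem_top
    have t4_5 : ((P.bracket (P.bracket w y) z) : R) ∈ P.gamma (3) := by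
      have h := P.br_mem_gamma (0) (1) _ t4_3 _ t4_4
      rwa [show (1)+(0)+2 = 3 by omega] at h
    have t4_6 : ((P.bracket e (P.bracket (P.bracket w y) z)) : R) ∈ P.gamma (k+4) := by
      have h := P.br_mem_gamma (2) (k) _ he _ t4_5
      rwa [show (k)+(2)+2 = k+4 by omega] at h
    have ht : ((P.bracket e (P.bracket (P.bracket w y) z)) : R) ∈ P.gamma (k+4) := P.gamma_le (by omega) t4_6
    have hmm := Submodule.mul_mem_mul ht (Submodule.mem_top (x := (x : R)))
    rw [mul_comm (x : R) ((P.bracket e (P.bracket (P.bracket w y) z)) : R)]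
    exact hmm
  have hM5 : ((x * (P.bracket (P.bracket (P.bracket e w) y) z)) : R) ∈ P.gamma (k+4) * (⊤ : Submodule K R) := by
    have t5_1 : (w : R) ∈ P.gamma 1 := Submodule.mem_top
    have t5_2 : ((P.bracket e w) : R) ∈ P.gamma (k+2) := by
      have h := P.br_mem_gamma (0) (k) _ he _ t5_1
      rwa [show (k)+(0)+2 = k+2 by omega] at h
    have t5_3 : (y : R) ∈ P.gamma 1 := Submodule.mem_top
    have t5_4 : ((P.bracket (P.bracket e w) y) : R) ∈ P.gamma (k+3) := by
      have h := P.br_mem_gamma (0) (k+1) _ t5_2 _ t5_3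
      rwa [show (k+1)+(0)+2 = k+3 by omega] at h
    have t5_5 : (z : R) ∈ P.gamma 1 := Submodule.mem_top
    have t5_6 : ((P.bracket (P.bracket (P.bracket e w) y) z) : R) ∈ P.gamma (k+4) := by
      have h := P.br_mem_gamma (0) (k+2) _ t5_4 _ t5_5
      rwa [show (k+2)+(0)+2 = k+4 by omega] at h
    have ht : ((P.bracket (P.bracket (P.bracket e w) y) z) : R) ∈ P.gamma (k+4) := P.gamma_le (by omega) t5_6
    have hmm := Submodule.mul_mem_mul ht (Submodule.mem_top (x := (x : R)))
    rw [mul_comm (x : R) ((P.bracket (P.bracket (P.bracket e w) y) z) : R)]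
    exact hmm
  have hM6 : ((w * (P.bracket (P.bracket e x) (P.bracket y z))) : R) ∈ P.gamma (k+4) * (⊤ : Submodule K R) := by
    have t6_1 : (x : R) ∈ P.gamma 1 := Submodule.mem_top
    have t6_2 : ((P.bracket e x) : R) ∈ P.gamma (k+2) := by
      have h := P.br_mem_gamma (0) (k) _ he _ t6_1
      rwa [show (k)+(0)+2 = k+2 by omega] at h
    have t6_3 : (y : R) ∈ P.gamma 1 := Submodule.mem_top
    have t6_4 : (z : R) ∈ P.gamma 1 := Submodule.mem_top
    have t6_5 : ((P.bracket y z) : R) ∈ P.gamma (2) := by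
      have h := P.br_mem_gamma (0) (0) _ t6_3 _ t6_4
      rwa [show (0)+(0)+2 = 2 by omega] at h
    have t6_6 : ((P.bracket (P.bracket e x) (P.bracket y z)) : R) ∈ P.gamma (k+4) := by
      have h := P.br_mem_gamma (1) (k+1) _ t6_2 _ t6_5
      rwa [show (k+1)+(1)+2 = k+4 by omega] at h
    have ht : ((P.bracket (P.bracket e x) (P.bracket y z)) : R) ∈ P.gamma (k+4) := P.gamma_le (by omega) t6_6
    have hmm := Submodule.mul_mem_mul ht (Submodule.mem_top (x := (w : R)))
    rw [mul_comm (w : R) ((P.bracket (P.bracket e x) (P.bracket y z)) : R)]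
    exact hmm
  have hM7 : ((P.bracket e (P.bracket (P.bracket w x) (y*z))) : R) ∈ P.gamma (k+4) * (⊤ : Submodule K R) := by
    have t7_1 : (w : R) ∈ P.gamma 1 := Submodule.mem_top
    have t7_2 : (x : R) ∈ P.gamma 1 := Submodule.mem_top
    have t7_3 : ((P.bracket w x) : R) ∈ P.gamma (2) := by
      have h := P.br_mem_gamma (0) (0) _ t7_1 _ t7_2
      rwa [show (0)+(0)+2 = 2 by omega] at h
    have t7_4 : ((y*z) : R) ∈ P.gamma 1 := Submodule.mem_top
    have t7_5 : ((P.bracket (P.bracket w x) (y*z)) : R) ∈ P.gamma (3) := by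
      have h := P.br_mem_gamma (0) (1) _ t7_3 _ t7_4
      rwa [show (1)+(0)+2 = 3 by omega] at h
    have t7_6 : ((P.bracket e (P.bracket (P.bracket w x) (y*z))) : R) ∈ P.gamma (k+4) := by
      have h := P.br_mem_gamma (2) (k) _ he _ t7_5
      rwa [show (k)+(2)+2 = k+4 by omega] at h
    have ht : ((P.bracket e (P.bracket (P.bracket w x) (y*z))) : R) ∈ P.gamma (k+4) := P.gamma_le (by omega) t7_6
    have hmm := Submodule.mul_mem_mul ht (Submodule.mem_top (x := (1 : R)))
    rwa [mul_one] at hmm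
  have hM8 : ((P.bracket (P.bracket e w) (P.bracket x (y*z))) : R) ∈ P.gamma (k+4) * (⊤ : Submodule K R) := by
    have t8_1 : (w : R) ∈ P.gamma 1 := Submodule.mem_top
    have t8_2 : ((P.bracket e w) : R) ∈ P.gamma (k+2) := by
      have h := P.br_mem_gamma (0) (k) _ he _ t8_1
      rwa [show (k)+(0)+2 = k+2 by omega] at h
    have t8_3 : (x : R) ∈ P.gamma 1 := Submodule.mem_top
    have t8_4 : ((y*z) : R) ∈ P.gamma 1 := Submodule.mem_top
    have t8_5 : ((P.bracket x (y*z)) : R) ∈ P.gamma (2) := by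
      have h := P.br_mem_gamma (0) (0) _ t8_3 _ t8_4
      rwa [show (0)+(0)+2 = 2 by omega] at h
    have t8_6 : ((P.bracket (P.bracket e w) (P.bracket x (y*z))) : R) ∈ P.gamma (k+4) := by
      have h := P.br_mem_gamma (1) (k+1) _ t8_2 _ t8_5
      rwa [show (k+1)+(1)+2 = k+4 by omega] at h
    have ht : ((P.bracket (P.bracket e w) (P.bracket x (y*z))) : R) ∈ P.gamma (k+4) := P.gamma_le (by omega) t8_6
    have hmm := Submodule.mul_mem_mul ht (Submodule.mem_top (x := (1 : R)))
    rwa [mul_one] at hmm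
  have hM9 : ((P.bracket (P.bracket e w) (P.bracket (x*y) z)) : R) ∈ P.gamma (k+4) * (⊤ : Submodule K R) := by
    have t9_1 : (w : R) ∈ P.gamma 1 := Submodule.mem_top
    have t9_2 : ((P.bracket e w) : R) ∈ P.gamma (k+2) := by
      have h := P.br_mem_gamma (0) (k) _ he _ t9_1
      rwa [show (k)+(0)+2 = k+2 by omega] at h
    have t9_3 : ((x*y) : R) ∈ P.gamma 1 := Submodule.mem_top
    have t9_4 : (z : R) ∈ P.gamma 1 := Submodule.mem_top
    have t9_5 : ((P.bracket (x*y) z) : R) ∈ P.gamma (2) := by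
      have h := P.br_mem_gamma (0) (0) _ t9_3 _ t9_4
      rwa [show (0)+(0)+2 = 2 by omega] at h
    have t9_6 : ((P.bracket (P.bracket e w) (P.bracket (x*y) z)) : R) ∈ P.gamma (k+4) := by
      have h := P.br_mem_gamma (1) (k+1) _ t9_2 _ t9_5
      rwa [show (k+1)+(1)+2 = k+4 by omega] at h
    have ht : ((P.bracket (P.bracket e w) (P.bracket (x*y) z)) : R) ∈ P.gamma (k+4) := P.gamma_le (by omega) t9_6
    have hmm := Submodule.mul_mem_mul ht (Submodule.mem_top (x := (1 : R)))
    rwa [mul_one] at hmm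
  have hM10 : ((P.bracket (P.bracket e (P.bracket w (x*z))) y) : R) ∈ P.gamma (k+4) * (⊤ : Submodule K R) := by
    have t10_1 : (w : R) ∈ P.gamma 1 := Submodule.mem_top
    have t10_2 : ((x*z) : R) ∈ P.gamma 1 := Submodule.mem_top
    have t10_3 : ((P.bracket w (x*z)) : R) ∈ P.gamma (2) := by
      have h := P.br_mem_gamma (0) (0) _ t10_1 _ t10_2
      rwa [show (0)+(0)+2 = 2 by omega] at h
    have t10_4 : ((P.bracket e (P.bracket w (x*z))) : R) ∈ P.gamma (k+3) := by
      have h := P.br_mem_gamma (1) (k) _ he _ t10_3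
      rwa [show (k)+(1)+2 = k+3 by omega] at h
    have t10_5 : (y : R) ∈ P.gamma 1 := Submodule.mem_top
    have t10_6 : ((P.bracket (P.bracket e (P.bracket w (x*z))) y) : R) ∈ P.gamma (k+4) := by
      have h := P.br_mem_gamma (0) (k+2) _ t10_4 _ t10_5
      rwa [show (k+2)+(0)+2 = k+4 by omega] at h
    have ht : ((P.bracket (P.bracket e (P.bracket w (x*z))) y) : R) ∈ P.gamma (k+4) := P.gamma_le (by omega) t10_6
    have hmm := Submodule.mul_mem_mul ht (Submodule.mem_top (x := (1 : R)))
    rwa [mul_one] at hmm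
  have hM11 : ((P.bracket e (P.bracket (P.bracket (w*x) y) z)) : R) ∈ P.gamma (k+4) * (⊤ : Submodule K R) := by
    have t11_1 : ((w*x) : R) ∈ P.gamma 1 := Submodule.mem_top
    have t11_2 : (y : R) ∈ P.gamma 1 := Submodule.mem_top
    have t11_3 : ((P.bracket (w*x) y) : R) ∈ P.gamma (2) := by
      have h := P.br_mem_gamma (0) (0) _ t11_1 _ t11_2
      rwa [show (0)+(0)+2 = 2 by omega] at h
    have t11_4 : (z : R) ∈ P.gamma 1 := Submodule.mem_top
    have t11_5 : ((P.bracket (P.bracket (w*x) y) z) : R) ∈ P.gamma (3) := by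
      have h := P.br_mem_gamma (0) (1) _ t11_3 _ t11_4
      rwa [show (1)+(0)+2 = 3 by omega] at h
    have t11_6 : ((P.bracket e (P.bracket (P.bracket (w*x) y) z)) : R) ∈ P.gamma (k+4) := by
      have h := P.br_mem_gamma (2) (k) _ he _ t11_5
      rwa [show (k)+(2)+2 = k+4 by omega] at h
    have ht : ((P.bracket e (P.bracket (P.bracket (w*x) y) z)) : R) ∈ P.gamma (k+4) := P.gamma_le (by omega) t11_6
    have hmm := Submodule.mul_mem_mul ht (Submodule.mem_top (x := (1 : R)))
    rwa [mul_one] at hmm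
  have hM12 : ((P.bracket (P.bracket e y) (P.bracket (w*x) z)) : R) ∈ P.gamma (k+4) * (⊤ : Submodule K R) := by
    have t12_1 : (y : R) ∈ P.gamma 1 := Submodule.mem_top
    have t12_2 : ((P.bracket e y) : R) ∈ P.gamma (k+2) := by
      have h := P.br_mem_gamma (0) (k) _ he _ t12_1
      rwa [show (k)+(0)+2 = k+2 by omega] at h
    have t12_3 : ((w*x) : R) ∈ P.gamma 1 := Submodule.mem_top
    have t12_4 : (z : R) ∈ P.gamma 1 := Submodule.mem_top
    have t12_5 : ((P.bracket (w*x) z) : R) ∈ P.gamma (2) := by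
      have h := P.br_mem_gamma (0) (0) _ t12_3 _ t12_4
      rwa [show (0)+(0)+2 = 2 by omega] at h
    have t12_6 : ((P.bracket (P.bracket e y) (P.bracket (w*x) z)) : R) ∈ P.gamma (k+4) := by
      have h := P.br_mem_gamma (1) (k+1) _ t12_2 _ t12_5
      rwa [show (k+1)+(1)+2 = k+4 by omega] at h
    have ht : ((P.bracket (P.bracket e y) (P.bracket (w*x) z)) : R) ∈ P.gamma (k+4) := P.gamma_le (by omega) t12_6
    have hmm := Submodule.mul_mem_mul ht (Submodule.mem_top (x := (1 : R)))
    rwa [mul_one] at hmm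
  have hM13 : ((P.bracket (P.bracket e (P.bracket (w*x) y)) z) : R) ∈ P.gamma (k+4) * (⊤ : Submodule K R) := by
    have t13_1 : ((w*x) : R) ∈ P.gamma 1 := Submodule.mem_top
    have t13_2 : (y : R) ∈ P.gamma 1 := Submodule.mem_top
    have t13_3 : ((P.bracket (w*x) y) : R) ∈ P.gamma (2) := by
      have h := P.br_mem_gamma (0) (0) _ t13_1 _ t13_2
      rwa [show (0)+(0)+2 = 2 by omega] at h
    have t13_4 : ((P.bracket e (P.bracket (w*x) y)) : R) ∈ P.gamma (k+3) := by
      have h := P.br_mem_gamma (1) (k) _ he _ t13_3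
      rwa [show (k)+(1)+2 = k+3 by omega] at h
    have t13_5 : (z : R) ∈ P.gamma 1 := Submodule.mem_top
    have t13_6 : ((P.bracket (P.bracket e (P.bracket (w*x) y)) z) : R) ∈ P.gamma (k+4) := by
      have h := P.br_mem_gamma (0) (k+2) _ t13_4 _ t13_5
      rwa [show (k+2)+(0)+2 = k+4 by omega] at h
    have ht : ((P.bracket (P.bracket e (P.bracket (w*x) y)) z) : R) ∈ P.gamma (k+4) := P.gamma_le (by omega) t13_6
    have hmm := Submodule.mul_mem_mul ht (Submodule.mem_top (x := (1 : R)))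
    rwa [mul_one] at hmm
  have hM14 : ((P.bracket e (P.bracket (w*y) (P.bracket x z))) : R) ∈ P.gamma (k+4) * (⊤ : Submodule K R) := by
    have t14_1 : ((w*y) : R) ∈ P.gamma 1 := Submodule.mem_top
    have t14_2 : (x : R) ∈ P.gamma 1 := Submodule.mem_top
    have t14_3 : (z : R) ∈ P.gamma 1 := Submodule.mem_top
    have t14_4 : ((P.bracket x z) : R) ∈ P.gamma (2) := by
      have h := P.br_mem_gamma (0) (0) _ t14_2 _ t14_3
      rwa [show (0)+(0)+2 = 2 by omega] at h
    have t14_5 : ((P.bracket (w*y) (P.bracket x z)) : R) ∈ P.gamma (3) := by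
      have h := P.br_mem_gamma (1) (0) _ t14_1 _ t14_4
      rwa [show (0)+(1)+2 = 3 by omega] at h
    have t14_6 : ((P.bracket e (P.bracket (w*y) (P.bracket x z))) : R) ∈ P.gamma (k+4) := by
      have h := P.br_mem_gamma (2) (k) _ he _ t14_5
      rwa [show (k)+(2)+2 = k+4 by omega] at h
    have ht : ((P.bracket e (P.bracket (w*y) (P.bracket x z))) : R) ∈ P.gamma (k+4) := P.gamma_le (by omega) t14_6
    have hmm := Submodule.mul_mem_mul ht (Submodule.mem_top (x := (1 : R)))
    rwa [mul_one] at hmm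
  have hM15 : ((z * (P.bracket (P.bracket e w) (P.bracket x y))) : R) ∈ P.gamma (k+4) * (⊤ : Submodule K R) := by
    have t15_1 : (w : R) ∈ P.gamma 1 := Submodule.mem_top
    have t15_2 : ((P.bracket e w) : R) ∈ P.gamma (k+2) := by
      have h := P.br_mem_gamma (0) (k) _ he _ t15_1
      rwa [show (k)+(0)+2 = k+2 by omega] at h
    have t15_3 : (x : R) ∈ P.gamma 1 := Submodule.mem_top
    have t15_4 : (y : R) ∈ P.gamma 1 := Submodule.mem_top
    have t15_5 : ((P.bracket x y) : R) ∈ P.gamma (2) := by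
      have h := P.br_mem_gamma (0) (0) _ t15_3 _ t15_4
      rwa [show (0)+(0)+2 = 2 by omega] at h
    have t15_6 : ((P.bracket (P.bracket e w) (P.bracket x y)) : R) ∈ P.gamma (k+4) := by
      have h := P.br_mem_gamma (1) (k+1) _ t15_2 _ t15_5
      rwa [show (k+1)+(1)+2 = k+4 by omega] at h
    have ht : ((P.bracket (P.bracket e w) (P.bracket x y)) : R) ∈ P.gamma (k+4) := P.gamma_le (by omega) t15_6
    have hmm := Submodule.mul_mem_mul ht (Submodule.mem_top (x := (z : R)))
    rw [mul_comm (z : R) ((P.bracket (P.bracket e w) (P.bracket x y)) : R)]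
    exact hmm
  have hM16 : ((z * (P.bracket (P.bracket e (P.bracket w x)) y)) : R) ∈ P.gamma (k+4) * (⊤ : Submodule K R) := by
    have t16_1 : (w : R) ∈ P.gamma 1 := Submodule.mem_top
    have t16_2 : (x : R) ∈ P.gamma 1 := Submodule.mem_top
    have t16_3 : ((P.bracket w x) : R) ∈ P.gamma (2) := by
      have h := P.br_mem_gamma (0) (0) _ t16_1 _ t16_2
      rwa [show (0)+(0)+2 = 2 by omega] at h
    have t16_4 : ((P.bracket e (P.bracket w x)) : R) ∈ P.gamma (k+3) := by
      have h := P.br_mem_gamma (1) (k) _ he _ t16_3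
      rwa [show (k)+(1)+2 = k+3 by omega] at h
    have t16_5 : (y : R) ∈ P.gamma 1 := Submodule.mem_top
    have t16_6 : ((P.bracket (P.bracket e (P.bracket w x)) y) : R) ∈ P.gamma (k+4) := by
      have h := P.br_mem_gamma (0) (k+2) _ t16_4 _ t16_5
      rwa [show (k+2)+(0)+2 = k+4 by omega] at h
    have ht : ((P.bracket (P.bracket e (P.bracket w x)) y) : R) ∈ P.gamma (k+4) := P.gamma_le (by omega) t16_6
    have hmm := Submodule.mul_mem_mul ht (Submodule.mem_top (x := (z : R)))
    rw [mul_comm (z : R) ((P.bracket (P.bracket e (P.bracket w x)) y) : R)]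
    exact hmm
  have hM17 : ((y * (P.bracket e (P.bracket (P.bracket w x) z))) : R) ∈ P.gamma (k+4) * (⊤ : Submodule K R) := by
    have t17_1 : (w : R) ∈ P.gamma 1 := Submodule.mem_top
    have t17_2 : (x : R) ∈ P.gamma 1 := Submodule.mem_top
    have t17_3 : ((P.bracket w x) : R) ∈ P.gamma (2) := by
      have h := P.br_mem_gamma (0) (0) _ t17_1 _ t17_2
      rwa [show (0)+(0)+2 = 2 by omega] at h
    have t17_4 : (z : R) ∈ P.gamma 1 := Submodule.mem_top
    have t17_5 : ((P.bracket (P.bracket w x) z) : R) ∈ P.gamma (3) := by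
      have h := P.br_mem_gamma (0) (1) _ t17_3 _ t17_4
      rwa [show (1)+(0)+2 = 3 by omega] at h
    have t17_6 : ((P.bracket e (P.bracket (P.bracket w x) z)) : R) ∈ P.gamma (k+4) := by
      have h := P.br_mem_gamma (2) (k) _ he _ t17_5
      rwa [show (k)+(2)+2 = k+4 by omega] at h
    have ht : ((P.bracket e (P.bracket (P.bracket w x) z)) : R) ∈ P.gamma (k+4) := P.gamma_le (by omega) t17_6
    have hmm := Submodule.mul_mem_mul ht (Submodule.mem_top (x := (y : R)))
    rw [mul_comm (y : R) ((P.bracket e (P.bracket (P.bracket w x) z)) : R)]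
    exact hmm
  have hM18 : ((y * (P.bracket (P.bracket e w) (P.bracket x z))) : R) ∈ P.gamma (k+4) * (⊤ : Submodule K R) := by
    have t18_1 : (w : R) ∈ P.gamma 1 := Submodule.mem_top
    have t18_2 : ((P.bracket e w) : R) ∈ P.gamma (k+2) := by
      have h := P.br_mem_gamma (0) (k) _ he _ t18_1
      rwa [show (k)+(0)+2 = k+2 by omega] at h
    have t18_3 : (x : R) ∈ P.gamma 1 := Submodule.mem_top
    have t18_4 : (z : R) ∈ P.gamma 1 := Submodule.mem_top
    have t18_5 : ((P.bracket x z) : R) ∈ P.gamma (2) := by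
      have h := P.br_mem_gamma (0) (0) _ t18_3 _ t18_4
      rwa [show (0)+(0)+2 = 2 by omega] at h
    have t18_6 : ((P.bracket (P.bracket e w) (P.bracket x z)) : R) ∈ P.gamma (k+4) := by
      have h := P.br_mem_gamma (1) (k+1) _ t18_2 _ t18_5
      rwa [show (k+1)+(1)+2 = k+4 by omega] at h
    have ht : ((P.bracket (P.bracket e w) (P.bracket x z)) : R) ∈ P.gamma (k+4) := P.gamma_le (by omega) t18_6
    have hmm := Submodule.mul_mem_mul ht (Submodule.mem_top (x := (y : R)))
    rw [mul_comm (y : R) ((P.bracket (P.bracket e w) (P.bracket x z)) : R)]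
    exact hmm
  have hM19 : ((x * (P.bracket (P.bracket e w) (P.bracket y z))) : R) ∈ P.gamma (k+4) * (⊤ : Submodule K R) := by
    have t19_1 : (w : R) ∈ P.gamma 1 := Submodule.mem_top
    have t19_2 : ((P.bracket e w) : R) ∈ P.gamma (k+2) := by
      have h := P.br_mem_gamma (0) (k) _ he _ t19_1
      rwa [show (k)+(0)+2 = k+2 by omega] at h
    have t19_3 : (y : R) ∈ P.gamma 1 := Submodule.mem_top
    have t19_4 : (z : R) ∈ P.gamma 1 := Submodule.mem_top
    have t19_5 : ((P.bracket y z) : R) ∈ P.gamma (2) := by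
      have h := P.br_mem_gamma (0) (0) _ t19_3 _ t19_4
      rwa [show (0)+(0)+2 = 2 by omega] at h
    have t19_6 : ((P.bracket (P.bracket e w) (P.bracket y z)) : R) ∈ P.gamma (k+4) := by
      have h := P.br_mem_gamma (1) (k+1) _ t19_2 _ t19_5
      rwa [show (k+1)+(1)+2 = k+4 by omega] at h
    have ht : ((P.bracket (P.bracket e w) (P.bracket y z)) : R) ∈ P.gamma (k+4) := P.gamma_le (by omega) t19_6
    have hmm := Submodule.mul_mem_mul ht (Submodule.mem_top (x := (x : R)))
    rw [mul_comm (x : R) ((P.bracket (P.bracket e w) (P.bracket y z)) : R)]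
    exact hmm
  have hM20 : ((x * (P.bracket (P.bracket e y) (P.bracket w z))) : R) ∈ P.gamma (k+4) * (⊤ : Submodule K R) := by
    have t20_1 : (y : R) ∈ P.gamma 1 := Submodule.mem_top
    have t20_2 : ((P.bracket e y) : R) ∈ P.gamma (k+2) := by
      have h := P.br_mem_gamma (0) (k) _ he _ t20_1
      rwa [show (k)+(0)+2 = k+2 by omega] at h
    have t20_3 : (w : R) ∈ P.gamma 1 := Submodule.mem_top
    have t20_4 : (z : R) ∈ P.gamma 1 := Submodule.mem_top
    have t20_5 : ((P.bracket w z) : R) ∈ P.gamma (2) := by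
      have h := P.br_mem_gamma (0) (0) _ t20_3 _ t20_4
      rwa [show (0)+(0)+2 = 2 by omega] at h
    have t20_6 : ((P.bracket (P.bracket e y) (P.bracket w z)) : R) ∈ P.gamma (k+4) := by
      have h := P.br_mem_gamma (1) (k+1) _ t20_2 _ t20_5
      rwa [show (k+1)+(1)+2 = k+4 by omega] at h
    have ht : ((P.bracket (P.bracket e y) (P.bracket w z)) : R) ∈ P.gamma (k+4) := P.gamma_le (by omega) t20_6
    have hmm := Submodule.mul_mem_mul ht (Submodule.mem_top (x := (x : R)))
    rw [mul_comm (x : R) ((P.bracket (P.bracket e y) (P.bracket w z)) : R)]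
    exact hmm
  have hM21 : ((x * (P.bracket (P.bracket e (P.bracket w y)) z)) : R) ∈ P.gamma (k+4) * (⊤ : Submodule K R) := by
    have t21_1 : (w : R) ∈ P.gamma 1 := Submodule.mem_top
    have t21_2 : (y : R) ∈ P.gamma 1 := Submodule.mem_top
    have t21_3 : ((P.bracket w y) : R) ∈ P.gamma (2) := by
      have h := P.br_mem_gamma (0) (0) _ t21_1 _ t21_2
      rwa [show (0)+(0)+2 = 2 by omega] at h
    have t21_4 : ((P.bracket e (P.bracket w y)) : R) ∈ P.gamma (k+3) := by
      have h := P.br_mem_gamma (1) (k) _ he _ t21_3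
      rwa [show (k)+(1)+2 = k+3 by omega] at h
    have t21_5 : (z : R) ∈ P.gamma 1 := Submodule.mem_top
    have t21_6 : ((P.bracket (P.bracket e (P.bracket w y)) z) : R) ∈ P.gamma (k+4) := by
      have h := P.br_mem_gamma (0) (k+2) _ t21_4 _ t21_5
      rwa [show (k+2)+(0)+2 = k+4 by omega] at h
    have ht : ((P.bracket (P.bracket e (P.bracket w y)) z) : R) ∈ P.gamma (k+4) := P.gamma_le (by omega) t21_6
    have hmm := Submodule.mul_mem_mul ht (Submodule.mem_top (x := (x : R)))
    rw [mul_comm (x : R) ((P.bracket (P.bracket e (P.bracket w y)) z) : R)]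
    exact hmm
  have hM22 : ((w * (P.bracket e (P.bracket (P.bracket x y) z))) : R) ∈ P.gamma (k+4) * (⊤ : Submodule K R) := by
    have t22_1 : (x : R) ∈ P.gamma 1 := Submodule.mem_top
    have t22_2 : (y : R) ∈ P.gamma 1 := Submodule.mem_top
    have t22_3 : ((P.bracket x y) : R) ∈ P.gamma (2) := by
      have h := P.br_mem_gamma (0) (0) _ t22_1 _ t22_2
      rwa [show (0)+(0)+2 = 2 by omega] at h
    have t22_4 : (z : R) ∈ P.gamma 1 := Submodule.mem_top
    have t22_5 : ((P.bracket (P.bracket x y) z) : R) ∈ P.gamma (3) := by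
      have h := P.br_mem_gamma (0) (1) _ t22_3 _ t22_4
      rwa [show (1)+(0)+2 = 3 by omega] at h
    have t22_6 : ((P.bracket e (P.bracket (P.bracket x y) z)) : R) ∈ P.gamma (k+4) := by
      have h := P.br_mem_gamma (2) (k) _ he _ t22_5
      rwa [show (k)+(2)+2 = k+4 by omega] at h
    have ht : ((P.bracket e (P.bracket (P.bracket x y) z)) : R) ∈ P.gamma (k+4) := P.gamma_le (by omega) t22_6
    have hmm := Submodule.mul_mem_mul ht (Submodule.mem_top (x := (w : R)))
    rw [mul_comm (w : R) ((P.bracket e (P.bracket (P.bracket x y) z)) : R)]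
    exact hmm
  have hM23 : ((w * (P.bracket (P.bracket e y) (P.bracket x z))) : R) ∈ P.gamma (k+4) * (⊤ : Submodule K R) := by
    have t23_1 : (y : R) ∈ P.gamma 1 := Submodule.mem_top
    have t23_2 : ((P.bracket e y) : R) ∈ P.gamma (k+2) := by
      have h := P.br_mem_gamma (0) (k) _ he _ t23_1
      rwa [show (k)+(0)+2 = k+2 by omega] at h
    have t23_3 : (x : R) ∈ P.gamma 1 := Submodule.mem_top
    have t23_4 : (z : R) ∈ P.gamma 1 := Submodule.mem_top
    have t23_5 : ((P.bracket x z) : R) ∈ P.gamma (2) := by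
      have h := P.br_mem_gamma (0) (0) _ t23_3 _ t23_4
      rwa [show (0)+(0)+2 = 2 by omega] at h
    have t23_6 : ((P.bracket (P.bracket e y) (P.bracket x z)) : R) ∈ P.gamma (k+4) := by
      have h := P.br_mem_gamma (1) (k+1) _ t23_2 _ t23_5
      rwa [show (k+1)+(1)+2 = k+4 by omega] at h
    have ht : ((P.bracket (P.bracket e y) (P.bracket x z)) : R) ∈ P.gamma (k+4) := P.gamma_le (by omega) t23_6
    have hmm := Submodule.mul_mem_mul ht (Submodule.mem_top (x := (w : R)))
    rw [mul_comm (w : R) ((P.bracket (P.bracket e y) (P.bracket x z)) : R)]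
    exact hmm
  have hM24 : ((w * (P.bracket (P.bracket e (P.bracket x y)) z)) : R) ∈ P.gamma (k+4) * (⊤ : Submodule K R) := by
    have t24_1 : (x : R) ∈ P.gamma 1 := Submodule.mem_top
    have t24_2 : (y : R) ∈ P.gamma 1 := Submodule.mem_top
    have t24_3 : ((P.bracket x y) : R) ∈ P.gamma (2) := by
      have h := P.br_mem_gamma (0) (0) _ t24_1 _ t24_2
      rwa [show (0)+(0)+2 = 2 by omega] at h
    have t24_4 : ((P.bracket e (P.bracket x y)) : R) ∈ P.gamma (k+3) := by
      have h := P.br_mem_gamma (1) (k) _ he _ t24_3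
      rwa [show (k)+(1)+2 = k+3 by omega] at h
    have t24_5 : (z : R) ∈ P.gamma 1 := Submodule.mem_top
    have t24_6 : ((P.bracket (P.bracket e (P.bracket x y)) z) : R) ∈ P.gamma (k+4) := by
      have h := P.br_mem_gamma (0) (k+2) _ t24_4 _ t24_5
      rwa [show (k+2)+(0)+2 = k+4 by omega] at h
    have ht : ((P.bracket (P.bracket e (P.bracket x y)) z) : R) ∈ P.gamma (k+4) := P.gamma_le (by omega) t24_6
    have hmm := Submodule.mul_mem_mul ht (Submodule.mem_top (x := (w : R)))
    rw [mul_comm (w : R) ((P.bracket (P.bracket e (P.bracket x y)) z) : R)]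
    exact hmm
  have hM25 : ((P.bracket (P.bracket e x) (P.bracket w (y*z))) : R) ∈ P.gamma (k+4) * (⊤ : Submodule K R) := by
    have t25_1 : (x : R) ∈ P.gamma 1 := Submodule.mem_top
    have t25_2 : ((P.bracket e x) : R) ∈ P.gamma (k+2) := by
      have h := P.br_mem_gamma (0) (k) _ he _ t25_1
      rwa [show (k)+(0)+2 = k+2 by omega] at h
    have t25_3 : (w : R) ∈ P.gamma 1 := Submodule.mem_top
    have t25_4 : ((y*z) : R) ∈ P.gamma 1 := Submodule.mem_top
    have t25_5 : ((P.bracket w (y*z)) : R) ∈ P.gamma (2) := by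
      have h := P.br_mem_gamma (0) (0) _ t25_3 _ t25_4
      rwa [show (0)+(0)+2 = 2 by omega] at h
    have t25_6 : ((P.bracket (P.bracket e x) (P.bracket w (y*z))) : R) ∈ P.gamma (k+4) := by
      have h := P.br_mem_gamma (1) (k+1) _ t25_2 _ t25_5
      rwa [show (k+1)+(1)+2 = k+4 by omega] at h
    have ht : ((P.bracket (P.bracket e x) (P.bracket w (y*z))) : R) ∈ P.gamma (k+4) := P.gamma_le (by omega) t25_6
    have hmm := Submodule.mul_mem_mul ht (Submodule.mem_top (x := (1 : R)))
    rwa [mul_one] at hmm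
  have hM26 : ((P.bracket e (P.bracket w (P.bracket (x*y) z))) : R) ∈ P.gamma (k+4) * (⊤ : Submodule K R) := by
    have t26_1 : (w : R) ∈ P.gamma 1 := Submodule.mem_top
    have t26_2 : ((x*y) : R) ∈ P.gamma 1 := Submodule.mem_top
    have t26_3 : (z : R) ∈ P.gamma 1 := Submodule.mem_top
    have t26_4 : ((P.bracket (x*y) z) : R) ∈ P.gamma (2) := by
      have h := P.br_mem_gamma (0) (0) _ t26_2 _ t26_3
      rwa [show (0)+(0)+2 = 2 by omega] at h
    have t26_5 : ((P.bracket w (P.bracket (x*y) z)) : R) ∈ P.gamma (3) := by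
      have h := P.br_mem_gamma (1) (0) _ t26_1 _ t26_4
      rwa [show (0)+(1)+2 = 3 by omega] at h
    have t26_6 : ((P.bracket e (P.bracket w (P.bracket (x*y) z))) : R) ∈ P.gamma (k+4) := by
      have h := P.br_mem_gamma (2) (k) _ he _ t26_5
      rwa [show (k)+(2)+2 = k+4 by omega] at h
    have ht : ((P.bracket e (P.bracket w (P.bracket (x*y) z))) : R) ∈ P.gamma (k+4) := P.gamma_le (by omega) t26_6
    have hmm := Submodule.mul_mem_mul ht (Submodule.mem_top (x := (1 : R)))
    rwa [mul_one] at hmm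
  have hM27 : ((P.bracket e (P.bracket (P.bracket w (x*y)) z)) : R) ∈ P.gamma (k+4) * (⊤ : Submodule K R) := by
    have t27_1 : (w : R) ∈ P.gamma 1 := Submodule.mem_top
    have t27_2 : ((x*y) : R) ∈ P.gamma 1 := Submodule.mem_top
    have t27_3 : ((P.bracket w (x*y)) : R) ∈ P.gamma (2) := by
      have h := P.br_mem_gamma (0) (0) _ t27_1 _ t27_2
      rwa [show (0)+(0)+2 = 2 by omega] at h
    have t27_4 : (z : R) ∈ P.gamma 1 := Submodule.mem_top
    have t27_5 : ((P.bracket (P.bracket w (x*y)) z) : R) ∈ P.gamma (3) := by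
      have h := P.br_mem_gamma (0) (1) _ t27_3 _ t27_4
      rwa [show (1)+(0)+2 = 3 by omega] at h
    have t27_6 : ((P.bracket e (P.bracket (P.bracket w (x*y)) z)) : R) ∈ P.gamma (k+4) := by
      have h := P.br_mem_gamma (2) (k) _ he _ t27_5
      rwa [show (k)+(2)+2 = k+4 by omega] at h
    have ht : ((P.bracket e (P.bracket (P.bracket w (x*y)) z)) : R) ∈ P.gamma (k+4) := P.gamma_le (by omega) t27_6
    have hmm := Submodule.mul_mem_mul ht (Submodule.mem_top (x := (1 : R)))
    rwa [mul_one] at hmm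
  have hM28 : ((P.bracket (P.bracket e (P.bracket w (x*y))) z) : R) ∈ P.gamma (k+4) * (⊤ : Submodule K R) := by
    have t28_1 : (w : R) ∈ P.gamma 1 := Submodule.mem_top
    have t28_2 : ((x*y) : R) ∈ P.gamma 1 := Submodule.mem_top
    have t28_3 : ((P.bracket w (x*y)) : R) ∈ P.gamma (2) := by
      have h := P.br_mem_gamma (0) (0) _ t28_1 _ t28_2
      rwa [show (0)+(0)+2 = 2 by omega] at h
    have t28_4 : ((P.bracket e (P.bracket w (x*y))) : R) ∈ P.gamma (k+3) := by
      have h := P.br_mem_gamma (1) (k) _ he _ t28_3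
      rwa [show (k)+(1)+2 = k+3 by omega] at h
    have t28_5 : (z : R) ∈ P.gamma 1 := Submodule.mem_top
    have t28_6 : ((P.bracket (P.bracket e (P.bracket w (x*y))) z) : R) ∈ P.gamma (k+4) := by
      have h := P.br_mem_gamma (0) (k+2) _ t28_4 _ t28_5
      rwa [show (k+2)+(0)+2 = k+4 by omega] at h
    have ht : ((P.bracket (P.bracket e (P.bracket w (x*y))) z) : R) ∈ P.gamma (k+4) := P.gamma_le (by omega) t28_6
    have hmm := Submodule.mul_mem_mul ht (Submodule.mem_top (x := (1 : R)))
    rwa [mul_one] at hmm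
  have hM29 : ((P.bracket e (P.bracket (P.bracket w (x*z)) y)) : R) ∈ P.gamma (k+4) * (⊤ : Submodule K R) := by
    have t29_1 : (w : R) ∈ P.gamma 1 := Submodule.mem_top
    have t29_2 : ((x*z) : R) ∈ P.gamma 1 := Submodule.mem_top
    have t29_3 : ((P.bracket w (x*z)) : R) ∈ P.gamma (2) := by
      have h := P.br_mem_gamma (0) (0) _ t29_1 _ t29_2
      rwa [show (0)+(0)+2 = 2 by omega] at h
    have t29_4 : (y : R) ∈ P.gamma 1 := Submodule.mem_top
    have t29_5 : ((P.bracket (P.bracket w (x*z)) y) : R) ∈ P.gamma (3) := by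
      have h := P.br_mem_gamma (0) (1) _ t29_3 _ t29_4
      rwa [show (1)+(0)+2 = 3 by omega] at h
    have t29_6 : ((P.bracket e (P.bracket (P.bracket w (x*z)) y)) : R) ∈ P.gamma (k+4) := by
      have h := P.br_mem_gamma (2) (k) _ he _ t29_5
      rwa [show (k)+(2)+2 = k+4 by omega] at h
    have ht : ((P.bracket e (P.bracket (P.bracket w (x*z)) y)) : R) ∈ P.gamma (k+4) := P.gamma_le (by omega) t29_6
    have hmm := Submodule.mul_mem_mul ht (Submodule.mem_top (x := (1 : R)))
    rwa [mul_one] at hmm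
  have hM30 : ((P.bracket e (P.bracket (w*x) (P.bracket y z))) : R) ∈ P.gamma (k+4) * (⊤ : Submodule K R) := by
    have t30_1 : ((w*x) : R) ∈ P.gamma 1 := Submodule.mem_top
    have t30_2 : (y : R) ∈ P.gamma 1 := Submodule.mem_top
    have t30_3 : (z : R) ∈ P.gamma 1 := Submodule.mem_top
    have t30_4 : ((P.bracket y z) : R) ∈ P.gamma (2) := by
      have h := P.br_mem_gamma (0) (0) _ t30_2 _ t30_3
      rwa [show (0)+(0)+2 = 2 by omega] at h
    have t30_5 : ((P.bracket (w*x) (P.bracket y z)) : R) ∈ P.gamma (3) := by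
      have h := P.br_mem_gamma (1) (0) _ t30_1 _ t30_4
      rwa [show (0)+(1)+2 = 3 by omega] at h
    have t30_6 : ((P.bracket e (P.bracket (w*x) (P.bracket y z))) : R) ∈ P.gamma (k+4) := by
      have h := P.br_mem_gamma (2) (k) _ he _ t30_5
      rwa [show (k)+(2)+2 = k+4 by omega] at h
    have ht : ((P.bracket e (P.bracket (w*x) (P.bracket y z))) : R) ∈ P.gamma (k+4) := P.gamma_le (by omega) t30_6
    have hmm := Submodule.mul_mem_mul ht (Submodule.mem_top (x := (1 : R)))
    rwa [mul_one] at hmm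
  have hM31 : ((P.bracket (P.bracket e x) (P.bracket (w*y) z)) : R) ∈ P.gamma (k+4) * (⊤ : Submodule K R) := by
    have t31_1 : (x : R) ∈ P.gamma 1 := Submodule.mem_top
    have t31_2 : ((P.bracket e x) : R) ∈ P.gamma (k+2) := by
      have h := P.br_mem_gamma (0) (k) _ he _ t31_1
      rwa [show (k)+(0)+2 = k+2 by omega] at h
    have t31_3 : ((w*y) : R) ∈ P.gamma 1 := Submodule.mem_top
    have t31_4 : (z : R) ∈ P.gamma 1 := Submodule.mem_top
    have t31_5 : ((P.bracket (w*y) z) : R) ∈ P.gamma (2) := by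
      have h := P.br_mem_gamma (0) (0) _ t31_3 _ t31_4
      rwa [show (0)+(0)+2 = 2 by omega] at h
    have t31_6 : ((P.bracket (P.bracket e x) (P.bracket (w*y) z)) : R) ∈ P.gamma (k+4) := by
      have h := P.br_mem_gamma (1) (k+1) _ t31_2 _ t31_5
      rwa [show (k+1)+(1)+2 = k+4 by omega] at h
    have ht : ((P.bracket (P.bracket e x) (P.bracket (w*y) z)) : R) ∈ P.gamma (k+4) := P.gamma_le (by omega) t31_6
    have hmm := Submodule.mul_mem_mul ht (Submodule.mem_top (x := (1 : R)))
    rwa [mul_one] at hmm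
  have hsum : ((z * (P.bracket e (P.bracket (P.bracket w x) y))) + (z * (P.bracket (P.bracket e x) (P.bracket w y))) + (y * (P.bracket (P.bracket e x) (P.bracket w z))) + (y * (P.bracket (P.bracket e x) (P.bracket w z))) + (y * (P.bracket (P.bracket e (P.bracket w x)) z)) + (x * (P.bracket e (P.bracket (P.bracket w y) z))) + (x * (P.bracket (P.bracket (P.bracket e w) y) z)) + (x * (P.bracket (P.bracket (P.bracket e w) y) z)) + (x * (P.bracket (P.bracket (P.bracket e w) y) z)) + (w * (P.bracket (P.bracket e x) (P.bracket y z))) + (P.bracket e (P.bracket (P.bracket w x) (y*z))) + (P.bracket e (P.bracket (P.bracket w x) (y*z))) + (P.bracket (P.bracket e w) (P.bracket x (y*z))) + (P.bracket (P.bracket e w) (P.bracket (x*y) z)) + (P.bracket (P.bracket e (P.bracket w (x*z))) y) + (P.bracket e (P.bracket (P.bracket (w*x) y) z)) + (P.bracket e (P.bracket (P.bracket (w*x) y) z)) + (P.bracket (P.bracket e y) (P.bracket (w*x) z)) + (P.bracket (P.bracket e (P.bracket (w*x) y)) z) + (P.bracket (P.bracket e (P.bracket (w*x) y)) z) + (P.bracket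 e (P.bracket (w*y) (P.bracket x z))) - (z * (P.bracket (P.bracket e w) (P.bracket x y))) - (z * (P.bracket (P.bracket e (P.bracket w x)) y)) - (y * (P.bracket e (P.bracket (P.bracket w x) z))) - (y * (P.bracket (P.bracket e w) (P.bracket x z))) - (y * (P.bracket (P.bracket e w) (P.bracket x z))) - (x * (P.bracket (P.bracket e w) (P.bracket y z))) - (x * (P.bracket (P.bracket e y) (P.bracket w z))) - (x * (P.bracket (P.bracket e y) (P.bracket w z))) - (x * (P.bracket (P.bracket e (P.bracket w y)) z)) - (w * (P.bracket e (P.bracket (P.bracket x y) z))) - (w * (P.bracket (P.bracket e y) (P.bracket x z))) - (w * (P.bracket (P.bracket e (P.bracket x y)) z)) - (w * (P.bracket (P.bracket e (P.bracket x y)) z)) - (P.bracket (P.bracket e x) (P.bracket w (y*z))) - (P.bracket e (P.bracket w (P.bracket (x*y) z))) - (P.bracket e (P.bracket (P.bracket w (x*y)) z)) - (P.bracket (P.bracket e (P.bracket w (x*y))) z) - (P.bracket e (P.bracket (P.bracket w (x*z)) y)) - (P.bracket e (P.bracket (P.bracket w (x*z)) y)) - (P.bracket e (P.bracket (P.bracket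 w (x*z)) y)) - (P.bracket e (P.bracket (w*x) (P.bracket y z))) - (P.bracket (P.bracket e x) (P.bracket (w*y) z)) : R) ∈ P.gamma (k+4) * (⊤ : Submodule K R) :=
    (sub_mem (sub_mem (sub_mem (sub_mem (sub_mem (sub_mem (sub_mem (sub_mem (sub_mem (sub_mem (sub_mem (sub_mem (sub_mem (sub_mem (sub_mem (sub_mem (sub_mem (sub_mem (sub_mem (sub_mem (sub_mem (sub_mem (add_mem (add_mem (add_mem (add_mem (add_mem (add_mem (add_mem (add_mem (add_mem (add_mem (add_mem (add_mem (add_mem (add_mem (add_mem (add_mem (add_mem (add_mem (add_mem (add_mem hM0 hM1) hM2) hM2) hM3) hM4) hM5) hM5) hM5) hM6) hM7) hM7) hM8) hM9) hM10) hM11) hM11) hM12) hM13) hM13) hM14) hM15) hM16) hM17) hM18) hM18) hM19) hM20) hM20) hM21) hM22) hM23) hM24) hM24) hM25) hM26) hM27) hM28) hM29) hM29) hM29) hM30) hM31)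
  have hconv : (3:K)⁻¹ • ((3:K) • (P.bracket (P.bracket (P.bracket e w * x) y) z)) = P.bracket (P.bracket (P.bracket e w * x) y) z := by
    rw [smul_smul, inv_mul_cancel₀ h3, one_smul]
  have h31 : (3:K) • (P.bracket (P.bracket (P.bracket e w * x) y) z) = 3 * (P.bracket (P.bracket (P.bracket e w * x) y) z) := by
    rw [Algebra.smul_def, map_ofNat]
  rw [← hconv, h31, P.key e w x y z]
  exact Submodule.smul_mem _ _ hsum

end PoissonStr

/-- if `char K ≠ 2, 3` then `{γ_m(R)·R, R, R} ⊆ γ_{m+2}(R)·R`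
for all `m ≥ 2`. -/
theorem bracket_gammaR_le {K R : Type*} [Field K] [CommRing R] [Algebra K R]
    (P : PoissonStr K R) (h2 : (2 : K) ≠ 0) (h3 : (3 : K) ≠ 0)
    (m : ℕ) (hm : 2 ≤ m) (c : R) (hc : c ∈ P.gamma m) (x y z : R) :
    P.bracket (P.bracket (c * x) y) z ∈ P.gamma (m + 2) * ⊤ := by
  obtain ⟨k, rfl⟩ : ∃ k, m = k + 2 := ⟨m - 2, by omega⟩
  have hc' : c ∈ Submodule.span K {t : R | ∃ a ∈ P.gamma (k+1),
      ∃ b ∈ (⊤ : Submodule K R), t = P.bracket a b} := hc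
  clear hc hm
  induction hc' using Submodule.span_induction with
  | mem u hu =>
    obtain ⟨e, he, w, -, rfl⟩ := hu
    exact P.main_step h3 k e he w x y z
  | zero =>
    simp only [zero_mul, map_zero, LinearMap.zero_apply]
    exact zero_mem _
  | add u v hu hv h1 h2 =>
    simp only [add_mul, map_add, LinearMap.add_apply]
    exact add_mem h1 h2
  | smul a u hu h1 =>
    simp only [smul_mul_assoc, map_smul, LinearMap.smul_apply]
    exact Submodule.smul_mem _ _ h1
end

section
/- Let L be a Lie algebra over a field K of characteristic 2 with basis {x, y_i (i ∈ ℕ)} and relations [x, y_i] = y_i, all other brackets of basis elements zero. Then the truncated symmetric Poisson algebra s(L) = S(L)/(v² : v ∈ L) is solvable of derived length 3 (δ_3(s(L)) = 0) but not strongly solvable (δ̃_n(s(L)) ≠ 0 for all n). -/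
namespace PoissonStr

variable {K R : Type*} [Field K] [CommRing R] [Algebra K R]

lemma sBr_le {P : PoissonStr K R} {M N Q : Submodule K R}
    (h : ∀ m ∈ M, ∀ n ∈ N, P.bracket m n ∈ Q) : P.sBr M N ≤ Q := by
  rw [sBr, Submodule.span_le]
  rintro z ⟨m, hm, n, hn, rfl⟩
  exact h m hm n hn

lemma mem_sBr_s19 (P : PoissonStr K R) {M N : Submodule K R} {m n : R}
    (hm : m ∈ M) (hn : n ∈ N) : P.bracket m n ∈ P.sBr M N :=
  Submodule.subset_span ⟨m, hm, n, hn, rfl⟩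

end PoissonStr

open MvPolynomial in
/-- The ideal `(v² : v ∈ L)` of squares of linear forms, where `L` has basis
`{x} ∪ {yᵢ : i ∈ ℕ}` realized as the variables indexed by `Option ℕ`. -/
noncomputable def sqIdeal (K : Type*) [Field K] : Ideal (MvPolynomial (Option ℕ) K) :=
  Ideal.span {p : MvPolynomial (Option ℕ) K |
    ∃ f ∈ Submodule.span K (Set.range (X : Option ℕ → MvPolynomial (Option ℕ) K)),
      p = f ^ 2}

/-- The truncated symmetric algebra `s(L) = S(L)/(v² : v ∈ L)` of the Lie algebra
`L = ⟨x, yᵢ | [x,yᵢ] = yᵢ⟩`, realized as truncated polynomials in the variables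
`x = X none`, `yᵢ = X (some i)`. -/
abbrev TruncSym (K : Type*) [Field K] := MvPolynomial (Option ℕ) K ⧸ sqIdeal K

open MvPolynomial in
lemma sqIdeal_le_spanSq (K : Type*) [Field K] [CharP K 2] :
    sqIdeal K ≤ Ideal.span {q : MvPolynomial (Option ℕ) K | ∃ v, q = X v ^ 2} := by
  rw [sqIdeal, Ideal.span_le]
  rintro p ⟨f, hf, rfl⟩
  show (f : MvPolynomial (Option ℕ) K) ^ 2 ∈ _
  induction hf using Submodule.span_induction with
  | mem g hg =>
    obtain ⟨v, rfl⟩ := hg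
    exact Ideal.subset_span ⟨v, rfl⟩
  | zero => simpa using Ideal.zero_mem _
  | add g h _ _ hg hh =>
    have : (g + h) ^ 2 = g ^ 2 + h ^ 2 + 2 * (g * h) := by ring
    have h2 : (2 : MvPolynomial (Option ℕ) K) = 0 := by
      have : ((2 : ℕ) : MvPolynomial (Option ℕ) K) = 0 := CharP.cast_eq_zero _ 2
      simpa using this
    rw [this, h2, zero_mul, add_zero]
    exact Ideal.add_mem _ hg hh
  | smul a g _ hg =>
    rw [smul_pow]
    rw [Algebra.smul_def]
    exact Ideal.mul_mem_left _ _ hg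

open MvPolynomial in
lemma coeff_spanSq_eq_zero {K : Type*} [Field K] {s : (Option ℕ) →₀ ℕ}
    (hs : ∀ v, s v ≤ 1) {p : MvPolynomial (Option ℕ) K}
    (hp : p ∈ Ideal.span {q : MvPolynomial (Option ℕ) K | ∃ v, q = X v ^ 2}) :
    coeff s p = 0 := by
  have H : ∀ r : MvPolynomial (Option ℕ) K, coeff s (r * p) = 0 := by
    induction hp using Submodule.span_induction with
    | mem q hq =>
      obtain ⟨v, rfl⟩ := hq
      intro r
      rw [X_pow_eq_monomial, coeff_mul_monomial']
      rw [if_neg]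
      intro hle
      have := hle v
      simp [Finsupp.single_apply] at this
      exact absurd (le_trans this (hs v)) (by norm_num)
    | zero => intro r; simp
    | add g h _ _ hg hh => intro r; rw [mul_add, coeff_add, hg, hh, add_zero]
    | smul a g _ hg =>
      intro r
      rw [smul_eq_mul, ← mul_assoc, hg]
  simpa using H 1

open MvPolynomial in
lemma mk_monomial_ne_zero {K : Type*} [Field K] [CharP K 2] {s : (Option ℕ) →₀ ℕ}
    (hs : ∀ v, s v ≤ 1) :
    Ideal.Quotient.mk (sqIdeal K) (monomial s (1 : K)) ≠ 0 := by
  rw [Ne, Ideal.Quotient.eq_zero_iff_mem]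
  intro h
  have := coeff_spanSq_eq_zero hs (sqIdeal_le_spanSq K h)
  rw [coeff_monomial, if_pos rfl] at this
  exact one_ne_zero this

open MvPolynomial in
lemma adjoin_mk_X_top (K : Type*) [Field K] :
    Algebra.adjoin K
      (Set.range fun v : Option ℕ =>
        Ideal.Quotient.mk (sqIdeal K) (X v : MvPolynomial (Option ℕ) K)) = ⊤ := by
  have h1 : Algebra.adjoin K (Set.range (X : Option ℕ → MvPolynomial (Option ℕ) K)) = ⊤ :=
    adjoin_range_X
  have h2 := AlgHom.map_adjoin (Ideal.Quotient.mkₐ K (sqIdeal K))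
      (Set.range (X : Option ℕ → MvPolynomial (Option ℕ) K))
  rw [h1] at h2
  have h3 : (⊤ : Subalgebra K (MvPolynomial (Option ℕ) K)).map
      (Ideal.Quotient.mkₐ K (sqIdeal K)) = ⊤ := by
    rw [Algebra.map_top]
    rw [AlgHom.range_eq_top]
    exact Ideal.Quotient.mkₐ_surjective K _
  rw [h3] at h2
  rw [h2, ← Set.range_comp]
  rfl

/-- helper sequence for the uderived part -/
def cSeq : ℕ → ℕ
  | 0 => 0
  | n + 1 => 3 * cSeq n + 1

open MvPolynomial in
lemma prod_X_eq_monomial (K : Type*) [Field K] (N : ℕ) :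
    (∏ i ∈ Finset.range N, (X (some i) : MvPolynomial (Option ℕ) K))
      = monomial (∑ i ∈ Finset.range N, Finsupp.single (some i) 1) 1 := by
  induction N with
  | zero => simp [monomial_zero']
  | succ n ih =>
    rw [Finset.prod_range_succ, Finset.sum_range_succ, ih, X, monomial_mul, mul_one]

lemma sum_single_le (N : ℕ) :
    ∀ v : Option ℕ, (∑ i ∈ Finset.range N, Finsupp.single (some i) (1 : ℕ)) v ≤ 1 := by
  intro v
  rw [Finset.sum_apply']
  cases v with
  | none => simp [Finsupp.single_apply]
  | some j =>
    have : ∀ i ∈ Finset.range N, (Finsupp.single (some i) (1:ℕ)) (some j)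
        = if i = j then 1 else 0 := by
      intro i _
      simp [Finsupp.single_apply]
    rw [Finset.sum_congr rfl this, Finset.sum_ite_eq' (Finset.range N) j (fun _ => 1)]
    split <;> simp

open MvPolynomial in
lemma prodY_ne_zero (K : Type*) [Field K] [CharP K 2] (N : ℕ) :
    Ideal.Quotient.mk (sqIdeal K)
      (∏ i ∈ Finset.range N, (X (some i) : MvPolynomial (Option ℕ) K)) ≠ 0 := by
  rw [prod_X_eq_monomial]
  exact mk_monomial_ne_zero (sum_single_le N)

set_option maxHeartbeats 1000000 in
open MvPolynomial in
/-- for `char K = 2` and the Lie algebra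
`L = ⟨x, yᵢ (i ∈ ℕ) | [x, yᵢ] = yᵢ⟩`, the truncated symmetric Poisson algebra
`s(L)` (any Poisson bracket with `{x, yᵢ} = yᵢ` and `{yᵢ, yⱼ} = 0`, which is then
determined by the Leibniz rule) is solvable of derived length 3 but not
strongly solvable. -/
theorem truncSym_solvable_not_strongly {K : Type*} [Field K] [CharP K 2]
    (P : PoissonStr K (TruncSym K))
    (hxy : ∀ i : ℕ,
      P.bracket (Ideal.Quotient.mk (sqIdeal K) (X none))
          (Ideal.Quotient.mk (sqIdeal K) (X (some i)))
        = Ideal.Quotient.mk (sqIdeal K) (X (some i)))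
    (hyy : ∀ i j : ℕ,
      P.bracket (Ideal.Quotient.mk (sqIdeal K) (X (some i)))
          (Ideal.Quotient.mk (sqIdeal K) (X (some j))) = 0) :
    P.derived 3 = ⊥ ∧ ∀ n : ℕ, P.uderived n ≠ ⊥ := by
  classical
  set x : TruncSym K := Ideal.Quotient.mk (sqIdeal K) (X none) with hxdef
  set y : ℕ → TruncSym K := fun i => Ideal.Quotient.mk (sqIdeal K) (X (some i)) with hydef
  have hxy' : ∀ i, P.bracket x (y i) = y i := hxy
  have hyy' : ∀ i j, P.bracket (y i) (y j) = 0 := hyy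
  -- characteristic two facts
  have h2 : (1 : TruncSym K) + 1 = 0 := by
    have hk : (1 : K) + 1 = 0 := by
      calc (1 : K) + 1 = ((2 : ℕ) : K) := by push_cast; ring
      _ = 0 := CharP.cast_eq_zero K 2
    calc (1 : TruncSym K) + 1 = algebraMap K (TruncSym K) (1 + 1) := by
          rw [map_add, map_one]
    _ = 0 := by rw [hk, map_zero]
  have addself : ∀ z : TruncSym K, z + z = 0 := fun z => by
    have hz : z + z = (1 + 1) * z := by ring
    rw [hz, h2, zero_mul]
  have symm : ∀ a b : TruncSym K, P.bracket a b = P.bracket b a := fun a b => by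
    rw [P.antisymm a b, neg_eq_of_add_eq_zero_left (addself _)]
  have br_one : ∀ a : TruncSym K, P.bracket 1 a = 0 := by
    intro a
    have h := P.leibniz 1 1 a
    rw [one_mul, one_mul] at h
    rw [addself] at h
    exact h
  have br_alg : ∀ (r : K) (a : TruncSym K), P.bracket (algebraMap K (TruncSym K) r) a = 0 := by
    intro r a
    rw [Algebra.algebraMap_eq_smul_one, map_smul, LinearMap.smul_apply, br_one, smul_zero]
  have brR : ∀ f a b : TruncSym K,
      P.bracket f (a * b) = a * P.bracket f b + b * P.bracket f a := by
    intro f a b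
    rw [symm f (a * b), P.leibniz a b f, symm b f, symm a f]
  -- the subalgebra generated by the yᵢ
  set A := Algebra.adjoin K (Set.range y) with hAdef
  have yA : ∀ i, y i ∈ A := fun i => Algebra.subset_adjoin ⟨i, rfl⟩
  have hA1 : ∀ a ∈ A, ∀ j, P.bracket a (y j) = 0 := by
    intro a ha
    induction ha using Algebra.adjoin_induction with
    | mem z hz => obtain ⟨i, rfl⟩ := hz; exact fun j => hyy' i j
    | algebraMap r => exact fun j => br_alg r _
    | add u v hu hv ihu ihv =>
      intro j; rw [map_add, LinearMap.add_apply, ihu j, ihv j, add_zero]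
    | mul u v hu hv ihu ihv =>
      intro j; rw [P.leibniz, ihu j, ihv j, mul_zero, mul_zero, add_zero]
  have hA0 : ∀ a ∈ A, ∀ b ∈ A, P.bracket a b = 0 := by
    intro a ha b hb
    induction hb using Algebra.adjoin_induction with
    | mem z hz => obtain ⟨i, rfl⟩ := hz; exact hA1 a ha i
    | algebraMap r => rw [symm, br_alg]
    | add u v hu hv ihu ihv => rw [map_add, ihu, ihv, add_zero]
    | mul u v hu hv ihu ihv =>
      rw [symm a (u * v), P.leibniz u v a, symm v a, ihv, symm u a, ihu,
        mul_zero, mul_zero, add_zero]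
  have hxA : ∀ a ∈ A, P.bracket x a ∈ A := by
    intro a ha
    induction ha using Algebra.adjoin_induction with
    | mem z hz => obtain ⟨i, rfl⟩ := hz; rw [hxy' i]; exact yA i
    | algebraMap r => rw [symm, br_alg]; exact zero_mem _
    | add u v hu hv ihu ihv => rw [map_add]; exact add_mem ihu ihv
    | mul u v hu hv ihu ihv =>
      rw [brR x u v]
      exact add_mem (mul_mem hu ihv) (mul_mem hv ihu)
  have hEE : ∀ a ∈ A, P.bracket x (P.bracket x a) = P.bracket x a := by
    intro a ha
    induction ha using Algebra.adjoin_induction with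
    | mem z hz => obtain ⟨i, rfl⟩ := hz; rw [hxy' i, hxy' i]
    | algebraMap r =>
      rw [symm x (algebraMap K (TruncSym K) r), br_alg r x, map_zero]
    | add u v hu hv ihu ihv => rw [map_add, map_add, ihu, ihv]
    | mul u v hu hv ihu ihv =>
      rw [brR x u v, map_add, brR x u (P.bracket x v), brR x v (P.bracket x u),
        ihu, ihv]
      linear_combination addself (P.bracket x v * P.bracket x u)
  -- centrality of c = {x, x}
  set cc := P.bracket x x with hcc
  have hcent : ∀ f : TruncSym K, P.bracket cc f = 0 := by
    intro f
    have j := P.jacobi x x f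
    rw [symm f x] at j
    rw [add_assoc, addself, add_zero] at j
    exact j
  have hxx : x * x = 0 := by
    rw [hxdef, ← map_mul, Ideal.Quotient.eq_zero_iff_mem]
    exact Ideal.subset_span ⟨X none, Submodule.subset_span ⟨none, rfl⟩, (sq _).symm⟩
  -- submodules
  set A' : Submodule K (TruncSym K) := Subalgebra.toSubmodule A with hA'def
  have memA' : ∀ {a : TruncSym K}, a ∈ A' ↔ a ∈ A := fun {a} => Subalgebra.mem_toSubmodule A
  set xA : Submodule K (TruncSym K) := A'.map (LinearMap.mulLeft K x) with hxAdef
  set cA : Submodule K (TruncSym K) := A'.map (LinearMap.mulLeft K cc) with hcAdef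
  set φ : TruncSym K →ₗ[K] TruncSym K :=
    (LinearMap.mulLeft K x) ∘ₗ (P.bracket x) + LinearMap.mulLeft K cc with hφdef
  have φapp : ∀ m : TruncSym K, φ m = x * P.bracket x m + cc * m := by
    intro m; simp [hφdef]
  set S : Submodule K (TruncSym K) := A'.map φ with hSdef
  -- R = A' ⊔ xA
  have hTopAx : ∀ f : TruncSym K, f ∈ A' ⊔ xA := by
    intro f
    have hf : f ∈ Algebra.adjoin K
        (Set.range fun v : Option ℕ => Ideal.Quotient.mk (sqIdeal K) (X v)) := by
      rw [adjoin_mk_X_top]; trivial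
    induction hf using Algebra.adjoin_induction with
    | mem z hz =>
      obtain ⟨v, rfl⟩ := hz
      cases v with
      | none =>
        apply Submodule.mem_sup_right
        refine Submodule.mem_map.mpr ⟨1, memA'.mpr (one_mem A), ?_⟩
        rw [LinearMap.mulLeft_apply, mul_one, hxdef]
      | some i => exact Submodule.mem_sup_left (memA'.mpr (yA i))
    | algebraMap r => exact Submodule.mem_sup_left (memA'.mpr (algebraMap_mem A r))
    | add u v hu hv ihu ihv => exact add_mem ihu ihv
    | mul u v hu hv ihu ihv =>
      rcases Submodule.mem_sup.mp ihu with ⟨a, ha, w, hw, rfl⟩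
      rcases Submodule.mem_map.mp hw with ⟨a', ha', rfl⟩
      rcases Submodule.mem_sup.mp ihv with ⟨b, hb, w2, hw2, rfl⟩
      rcases Submodule.mem_map.mp hw2 with ⟨b', hb', rfl⟩
      simp only [LinearMap.mulLeft_apply]
      have expand : (a + x * a') * (b + x * b')
          = a * b + x * (a * b') + x * (a' * b) + (x * x) * (a' * b') := by ring
      rw [expand, hxx, zero_mul, add_zero]
      refine add_mem (add_mem ?_ ?_) ?_
      · exact Submodule.mem_sup_left (memA'.mpr (mul_mem (memA'.mp ha) (memA'.mp hb)))
      · exact Submodule.mem_sup_right (Submodule.mem_map.mpr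
          ⟨a * b', memA'.mpr (mul_mem (memA'.mp ha) (memA'.mp hb')), rfl⟩)
      · exact Submodule.mem_sup_right (Submodule.mem_map.mpr
          ⟨a' * b, memA'.mpr (mul_mem (memA'.mp ha') (memA'.mp hb)), rfl⟩)
  -- bracket expansion
  have brexp : ∀ m1 m2 n1 n2 : TruncSym K,
      P.bracket (m1 + m2) (n1 + n2)
        = P.bracket m1 n1 + P.bracket m1 n2 + P.bracket m2 n1 + P.bracket m2 n2 := by
    intros m1 m2 n1 n2
    simp only [map_add, LinearMap.add_apply]
    ring
  have brxa_b : ∀ a b : TruncSym K, a ∈ A → b ∈ A →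
      P.bracket (x * a) b = a * P.bracket x b := by
    intro a b ha hb
    rw [P.leibniz x a b, hA0 a ha b hb, mul_zero, zero_add]
  have brφ : ∀ a b : TruncSym K, P.bracket (x * a) (x * b) = φ (a * b) := by
    intro a b
    rw [φapp, P.leibniz x a (x * b), symm a (x * b), P.leibniz x b a,
      symm x (x * b), P.leibniz x b x, symm b x, brR x a b, ← hcc]
    linear_combination (P.bracket b a) * hxx
  -- first derived subspace
  have hder1 : P.derived 1 = P.sBr ⊤ ⊤ := rfl
  have hder2 : P.derived 2 = P.sBr (P.derived 1) (P.derived 1) := rfl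
  have hder3 : P.derived 3 = P.sBr (P.derived 2) (P.derived 2) := rfl
  have hδ1 : P.derived 1 ≤ A' ⊔ S := by
    rw [hder1]
    apply PoissonStr.sBr_le
    intro m _ n _
    rcases Submodule.mem_sup.mp (hTopAx m) with ⟨a, ha, w, hw, rfl⟩
    rcases Submodule.mem_map.mp hw with ⟨a', ha', rfl⟩
    rcases Submodule.mem_sup.mp (hTopAx n) with ⟨b, hb, w2, hw2, rfl⟩
    rcases Submodule.mem_map.mp hw2 with ⟨b', hb', rfl⟩
    simp only [LinearMap.mulLeft_apply]
    rw [brexp]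
    have t1 : P.bracket a b ∈ A' ⊔ S := by
      rw [hA0 a (memA'.mp ha) b (memA'.mp hb)]; exact zero_mem _
    have t2 : P.bracket a (x * b') ∈ A' ⊔ S := by
      rw [symm a (x * b'), brxa_b b' a (memA'.mp hb') (memA'.mp ha)]
      exact Submodule.mem_sup_left
        (memA'.mpr (mul_mem (memA'.mp hb') (hxA a (memA'.mp ha))))
    have t3 : P.bracket (x * a') b ∈ A' ⊔ S := by
      rw [brxa_b a' b (memA'.mp ha') (memA'.mp hb)]
      exact Submodule.mem_sup_left
        (memA'.mpr (mul_mem (memA'.mp ha') (hxA b (memA'.mp hb))))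
    have t4 : P.bracket (x * a') (x * b') ∈ A' ⊔ S := by
      rw [brφ a' b']
      exact Submodule.mem_sup_right
        (Submodule.mem_map.mpr ⟨a' * b', memA'.mpr (mul_mem (memA'.mp ha') (memA'.mp hb')), rfl⟩)
    exact add_mem (add_mem (add_mem t1 t2) t3) t4
  -- auxiliary bracket identities with cc
  have wcc : ∀ a : TruncSym K, a ∈ A → ∀ b : TruncSym K, b ∈ A →
      P.bracket (cc * a) b = 0 := by
    intro a ha b hb
    rw [P.leibniz cc a b, hA0 a ha b hb, hcent b, mul_zero, mul_zero, add_zero]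
  have brφA : ∀ m : TruncSym K, m ∈ A → ∀ α : TruncSym K, α ∈ A →
      P.bracket (φ m) α = P.bracket x m * P.bracket x α := by
    intro m hm α hα
    rw [φapp m, map_add, LinearMap.add_apply,
      brxa_b (P.bracket x m) α (hxA m hm) hα, wcc m hm α hα, add_zero]
  have brφφ : ∀ m1 : TruncSym K, m1 ∈ A → ∀ m2 : TruncSym K, m2 ∈ A →
      P.bracket (φ m1) (φ m2) = cc * (P.bracket x m1 * P.bracket x m2) := by
    intro m1 hm1 m2 hm2
    have hu : P.bracket x (P.bracket x m1) = P.bracket x m1 := hEE m1 hm1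
    have hv : P.bracket x (P.bracket x m2) = P.bracket x m2 := hEE m2 hm2
    have huA : P.bracket x m1 ∈ A := hxA m1 hm1
    have hvA : P.bracket x m2 ∈ A := hxA m2 hm2
    have k1 : P.bracket (x * P.bracket x m1) (x * P.bracket x m2)
        = cc * (P.bracket x m1 * P.bracket x m2) := by
      rw [brφ, φapp, brR x (P.bracket x m1) (P.bracket x m2), hu, hv]
      linear_combination x * addself (P.bracket x m1 * P.bracket x m2)
    have e2 : P.bracket x (cc * m2) = cc * P.bracket x m2 := by
      rw [symm x (cc * m2), P.leibniz cc m2 x, hcent x, mul_zero, add_zero, symm m2 x]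
    have e2' : P.bracket x (cc * m1) = cc * P.bracket x m1 := by
      rw [symm x (cc * m1), P.leibniz cc m1 x, hcent x, mul_zero, add_zero, symm m1 x]
    have e1 : P.bracket (P.bracket x m1) (cc * m2) = 0 := by
      rw [symm (P.bracket x m1) (cc * m2)]
      exact wcc m2 hm2 _ huA
    have e1' : P.bracket (P.bracket x m2) (cc * m1) = 0 := by
      rw [symm (P.bracket x m2) (cc * m1)]
      exact wcc m1 hm1 _ hvA
    have k2 : P.bracket (x * P.bracket x m1) (cc * m2)
        = cc * (P.bracket x m1 * P.bracket x m2) := by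
      rw [P.leibniz x (P.bracket x m1) (cc * m2), e1, e2, mul_zero, zero_add]
      ring
    have k3 : P.bracket (cc * m1) (x * P.bracket x m2)
        = cc * (P.bracket x m1 * P.bracket x m2) := by
      rw [symm (cc * m1) (x * P.bracket x m2),
        P.leibniz x (P.bracket x m2) (cc * m1), e1', e2', mul_zero, zero_add]
      ring
    have k4 : P.bracket (cc * m1) (cc * m2) = 0 := by
      rw [P.leibniz cc m1 (cc * m2), hcent (cc * m2), mul_zero, add_zero,
        symm m1 (cc * m2), wcc m2 hm2 m1 hm1, mul_zero]
    rw [φapp m1, φapp m2, brexp, k1, k2, k3, k4, add_zero]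
    linear_combination addself (cc * (P.bracket x m1 * P.bracket x m2))
  -- second derived subspace
  have hδ2 : P.derived 2 ≤ A' ⊔ cA := by
    rw [hder2]
    apply PoissonStr.sBr_le
    intro m hm n hn
    rcases Submodule.mem_sup.mp (hδ1 hm) with ⟨α, hα, w, hw, rfl⟩
    rcases Submodule.mem_map.mp hw with ⟨m1, hm1, rfl⟩
    rcases Submodule.mem_sup.mp (hδ1 hn) with ⟨β, hβ, w2, hw2, rfl⟩
    rcases Submodule.mem_map.mp hw2 with ⟨m2, hm2, rfl⟩
    rw [brexp]
    have t1 : P.bracket α β ∈ A' ⊔ cA := by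
      rw [hA0 α (memA'.mp hα) β (memA'.mp hβ)]; exact zero_mem _
    have t2 : P.bracket α (φ m2) ∈ A' ⊔ cA := by
      rw [symm α (φ m2), brφA m2 (memA'.mp hm2) α (memA'.mp hα)]
      exact Submodule.mem_sup_left
        (memA'.mpr (mul_mem (hxA m2 (memA'.mp hm2)) (hxA α (memA'.mp hα))))
    have t3 : P.bracket (φ m1) β ∈ A' ⊔ cA := by
      rw [brφA m1 (memA'.mp hm1) β (memA'.mp hβ)]
      exact Submodule.mem_sup_left
        (memA'.mpr (mul_mem (hxA m1 (memA'.mp hm1)) (hxA β (memA'.mp hβ))))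
    have t4 : P.bracket (φ m1) (φ m2) ∈ A' ⊔ cA := by
      rw [brφφ m1 (memA'.mp hm1) m2 (memA'.mp hm2)]
      exact Submodule.mem_sup_right (Submodule.mem_map.mpr
        ⟨P.bracket x m1 * P.bracket x m2,
          memA'.mpr (mul_mem (hxA m1 (memA'.mp hm1)) (hxA m2 (memA'.mp hm2))), rfl⟩)
    exact add_mem (add_mem (add_mem t1 t2) t3) t4
  -- third derived subspace vanishes
  have hδ3 : P.derived 3 = ⊥ := by
    apply le_bot_iff.mp
    rw [hder3]
    apply PoissonStr.sBr_le
    intro m hm n hn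
    rcases Submodule.mem_sup.mp (hδ2 hm) with ⟨α, hα, w, hw, rfl⟩
    rcases Submodule.mem_map.mp hw with ⟨α', hα', rfl⟩
    rcases Submodule.mem_sup.mp (hδ2 hn) with ⟨β, hβ, w2, hw2, rfl⟩
    rcases Submodule.mem_map.mp hw2 with ⟨β', hβ', rfl⟩
    simp only [LinearMap.mulLeft_apply]
    rw [brexp]
    have t1 : P.bracket α β = 0 := hA0 α (memA'.mp hα) β (memA'.mp hβ)
    have t2 : P.bracket α (cc * β') = 0 := by
      rw [symm α (cc * β')]
      exact wcc β' (memA'.mp hβ') α (memA'.mp hα)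
    have t3 : P.bracket (cc * α') β = 0 := wcc α' (memA'.mp hα') β (memA'.mp hβ)
    have t4 : P.bracket (cc * α') (cc * β') = 0 := by
      rw [P.leibniz cc α' (cc * β'), hcent (cc * β'), mul_zero, add_zero,
        symm α' (cc * β'), wcc β' (memA'.mp hβ') α' (memA'.mp hα'), mul_zero]
    rw [t1, t2, t3, t4]
    simp
  -- Part B: the upper derived series never vanishes
  have br_x_prod : ∀ s : Finset ℕ,
      P.bracket x (∏ i ∈ s, y i) = s.card • ∏ i ∈ s, y i := by
    intro s
    induction s using Finset.induction_on with
    | empty => simp only [Finset.prod_empty, Finset.card_empty, zero_smul]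
               rw [symm x 1, br_one]
    | @insert j s hj ih =>
      rw [Finset.prod_insert hj, Finset.card_insert_of_notMem hj,
        brR x (y j) (∏ i ∈ s, y i), ih, hxy' j, mul_smul_comm, succ_nsmul,
        mul_comm (∏ i ∈ s, y i) (y j)]
  have odd_smul : ∀ (k : ℕ) (z : TruncSym K), (2 * k + 1) • z = z := by
    intro k z
    have h0 : (2 * k) • z = 0 := by
      rw [two_mul, add_nsmul, addself]
    rw [succ_nsmul, h0, zero_add]
  have prodA : ∀ s : Finset ℕ, (∏ i ∈ s, y i) ∈ A :=
    fun s => prod_mem fun i _ => yA i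
  have hbrA2 : ∀ s t : Finset ℕ,
      P.bracket (∏ i ∈ s, y i) (∏ i ∈ t, y i) = 0 :=
    fun s t => hA0 _ (prodA s) _ (prodA t)
  have inv : ∀ n : ℕ, ∀ a : ℕ, ∀ g : TruncSym K,
      (∏ i ∈ Finset.Ico a (a + cSeq n), y i) * g ∈ P.uderived n := by
    intro n
    induction n with
    | zero => intro a g; exact Submodule.mem_top
    | succ n ih =>
      intro a g
      have hu : (∏ i ∈ Finset.Ico a (a + cSeq n), y i) * x ∈ P.uderived n := ih a x
      have hv : (∏ i ∈ Finset.Ico (a + cSeq n) (a + cSeq n + (2 * cSeq n + 1)), y i)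
          ∈ P.uderived n := by
        have e := Finset.prod_Ico_consecutive y
          (show a + cSeq n ≤ a + cSeq n + cSeq n by omega)
          (show a + cSeq n + cSeq n ≤ a + cSeq n + (2 * cSeq n + 1) by omega)
        rw [← e]
        exact ih (a + cSeq n) (∏ i ∈ Finset.Ico (a + cSeq n + cSeq n)
          (a + cSeq n + (2 * cSeq n + 1)), y i)
      have hcard : (Finset.Ico (a + cSeq n) (a + cSeq n + (2 * cSeq n + 1))).card
          = 2 * cSeq n + 1 := by
        rw [Nat.card_Ico]; omega
      have hbr : P.bracket ((∏ i ∈ Finset.Ico a (a + cSeq n), y i) * x)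
          (∏ i ∈ Finset.Ico (a + cSeq n) (a + cSeq n + (2 * cSeq n + 1)), y i)
          = ∏ i ∈ Finset.Ico a (a + cSeq (n + 1)), y i := by
        rw [P.leibniz (∏ i ∈ Finset.Ico a (a + cSeq n), y i) x
            (∏ i ∈ Finset.Ico (a + cSeq n) (a + cSeq n + (2 * cSeq n + 1)), y i),
          br_x_prod, hbrA2, mul_zero, add_zero, hcard, odd_smul]
        have hc1 : a + cSeq (n + 1) = a + cSeq n + (2 * cSeq n + 1) := by
          rw [show cSeq (n + 1) = 3 * cSeq n + 1 from rfl]; omega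
        rw [hc1]
        exact Finset.prod_Ico_consecutive y (by omega) (by omega)
      have : P.bracket ((∏ i ∈ Finset.Ico a (a + cSeq n), y i) * x)
          (∏ i ∈ Finset.Ico (a + cSeq n) (a + cSeq n + (2 * cSeq n + 1)), y i) * g
          ∈ P.uderived (n + 1) :=
        Submodule.mul_mem_mul (P.mem_sBr_s19 hu hv) Submodule.mem_top
      rw [hbr] at this
      exact this
  refine ⟨hδ3, ?_⟩
  intro n hbot
  have hmem := inv n 0 1
  rw [hbot, mul_one, Submodule.mem_bot] at hmem
  have hz : Ideal.Quotient.mk (sqIdeal K)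
      (∏ i ∈ Finset.range (cSeq n), (X (some i) : MvPolynomial (Option ℕ) K)) = 0 := by
    rw [map_prod]
    rw [Finset.range_eq_Ico] at *
    simpa [hydef] using hmem
  exact prodY_ne_zero K (cSeq n) hz
end
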